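/- arXiv:1704.07848 — 9 statements merged into one kernel-verified Lean document; each statement's English description precedes it below -/
import Mathlib

section
/- For any positive semidefinite matrix Q (a possibly singular precision matrix), there exists a permutation matrix P, a strictly lower triangular matrix B, and a diagonal matrix F with non-negative diagonal entries such that P Q Pᵀ = (I - B)ᵀ F (I - B). -/
/-!
Peel off the last coordinate. With `f = Q n n`, positive semidefiniteness forces the last column
of `Q` to be `f • (v, 1)` for some `v` (it vanishes when `f = 0`), and the Schur complement
`Q - f (v, 1)(v, 1)ᵀ` is again positive semidefinite and lives on the first `n` coordinates.
Iterating writes `Q = ∑ₐ dₐ ℓₐ ℓₐᵀ` with `dₐ ≥ 0`, `ℓₐ` supported on the coordinates `≤ a` and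
`ℓₐ a = 1`; these rows form `1 - B` with `B` strictly lower triangular, so no permutation is
needed.
-/

open Matrix
open scoped ComplexOrder

namespace Matrix

section

variable {ι R 𝕜 : Type*} [Fintype ι] [DecidableEq ι]

theorem ext_of_dotProduct_mulVec [CommSemiring R] {A B : Matrix ι ι R}
    (h : ∀ x y, x ⬝ᵥ A *ᵥ y = x ⬝ᵥ B *ᵥ y) : A = B :=
  ext_of_mulVec_single fun j => funext fun i => by
    simpa only [single_one_dotProduct] using h (Pi.single i 1) (Pi.single j 1)

theorem dotProduct_mulVec_transpose_mul_diagonal_mul [CommSemiring R]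
    (L : Matrix ι ι R) (d x y : ι → R) :
    x ⬝ᵥ (Lᵀ * diagonal d * L) *ᵥ y = ∑ a, d a * (L *ᵥ x) a * (L *ᵥ y) a := by
  rw [← mulVec_mulVec, ← mulVec_mulVec, dotProduct_mulVec, vecMul_transpose]
  simp only [dotProduct, mulVec_diagonal]
  exact Finset.sum_congr rfl fun a _ => by ring

variable [RCLike 𝕜] {Q : Matrix ι ι 𝕜}

theorem PosSemidef.apply_eq_zero_of_diag_eq_zero (hQ : Q.PosSemidef) {p : ι} (hp : Q p p = 0)
    (i : ι) : Q i p = 0 := by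
  have hform : star (Pi.single p 1) ⬝ᵥ Q *ᵥ Pi.single p 1 = 0 := by simp [hp]
  simpa [mulVec_single_one] using congrFun ((hQ.dotProduct_mulVec_zero_iff _).mp hform) i

theorem PosSemidef.exists_col_eq_diag_mul (hQ : Q.PosSemidef) (p : ι) :
    ∃ v : ι → 𝕜, ∀ i, Q i p = Q p p * v i := by
  by_cases hp : Q p p = 0
  · exact ⟨0, fun i => by simp [hQ.apply_eq_zero_of_diag_eq_zero hp i]⟩
  · exact ⟨fun i => Q i p / Q p p, fun i => by field_simp⟩

end

variable {R : Type*} {n : ℕ}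

theorem snoc_dotProduct_snoc [CommSemiring R] (x y : Fin n → R) (s t : R) :
    (Fin.snoc x s : Fin (n + 1) → R) ⬝ᵥ Fin.snoc y t = x ⬝ᵥ y + s * t := by
  simp [dotProduct, Fin.sum_univ_castSucc]

theorem snoc_dotProduct_mulVec_snoc [CommSemiring R] (Q : Matrix (Fin (n + 1)) (Fin (n + 1)) R)
    (x y : Fin n → R) (s t : R) :
    (Fin.snoc x s : Fin (n + 1) → R) ⬝ᵥ Q *ᵥ Fin.snoc y t =
      x ⬝ᵥ Q.submatrix Fin.castSucc Fin.castSucc *ᵥ y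
        + s * ((fun j => Q (Fin.last n) j.castSucc) ⬝ᵥ y)
        + (x ⬝ᵥ fun i => Q i.castSucc (Fin.last n)) * t + s * Q (Fin.last n) (Fin.last n) * t := by
  simp only [dotProduct, mulVec, Fin.sum_univ_castSucc, Fin.snoc_castSucc, Fin.snoc_last,
    submatrix_apply, add_mul, Finset.sum_add_distrib, Finset.mul_sum, Finset.sum_mul, mul_comm,
    mul_left_comm]
  ring

theorem snoc_dotProduct_mulVec_snoc_of_col_eq [CommRing R]
    {Q : Matrix (Fin (n + 1)) (Fin (n + 1)) R} {v : Fin n → R} (hQ : Q.IsSymm)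
    (hv : ∀ i, Q i.castSucc (Fin.last n) = Q (Fin.last n) (Fin.last n) * v i)
    (x y : Fin n → R) (s t : R) :
    (Fin.snoc x s : Fin (n + 1) → R) ⬝ᵥ Q *ᵥ Fin.snoc y t =
      x ⬝ᵥ (Q.submatrix Fin.castSucc Fin.castSucc
          - Q (Fin.last n) (Fin.last n) • vecMulVec v v) *ᵥ y
        + Q (Fin.last n) (Fin.last n) * (v ⬝ᵥ x + s) * (v ⬝ᵥ y + t) := by
  have hcol : (fun i => Q i.castSucc (Fin.last n)) = Q (Fin.last n) (Fin.last n) • v :=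
    funext hv
  have hrow : (fun j => Q (Fin.last n) j.castSucc) = Q (Fin.last n) (Fin.last n) • v :=
    funext fun j => (hQ.apply (Fin.last n) j.castSucc).symm.trans (hv j)
  have hrank : x ⬝ᵥ (Q (Fin.last n) (Fin.last n) • vecMulVec v v) *ᵥ y
      = Q (Fin.last n) (Fin.last n) * (v ⬝ᵥ x) * (v ⬝ᵥ y) := by
    simp only [smul_mulVec, dotProduct_smul, dotProduct_mulVec, vecMul_vecMulVec, smul_dotProduct,
      smul_eq_mul, dotProduct_comm x v, mul_assoc]
  rw [snoc_dotProduct_mulVec_snoc, hcol, hrow, sub_mulVec, dotProduct_sub, hrank]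
  simp only [smul_dotProduct, dotProduct_smul, smul_eq_mul, dotProduct_comm x v]
  ring

theorem PosSemidef.submatrix_castSucc_sub_smul_vecMulVec
    {Q : Matrix (Fin (n + 1)) (Fin (n + 1)) ℝ} {v : Fin n → ℝ} (hQ : Q.PosSemidef)
    (hv : ∀ i, Q i.castSucc (Fin.last n) = Q (Fin.last n) (Fin.last n) * v i) :
    (Q.submatrix Fin.castSucc Fin.castSucc
      - Q (Fin.last n) (Fin.last n) • vecMulVec v v).PosSemidef := by
  have hsymm : Q.IsSymm := hQ.isHermitian
  refine .of_dotProduct_mulVec_nonneg ?_ fun x => ?_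
  · exact IsHermitian.ext fun i j => by
      simp [vecMulVec_apply, hsymm.apply i.castSucc j.castSucc, mul_comm]
  · have h := hQ.dotProduct_mulVec_nonneg (Fin.snoc x (-(v ⬝ᵥ x)))
    rw [star_trivial, snoc_dotProduct_mulVec_snoc_of_col_eq hsymm hv] at h
    simpa using h

/-- The block matrix `[[B, 0], [r, 0]]`. -/
def snocLastRow [Zero R] (B : Matrix (Fin n) (Fin n) R) (r : Fin n → R) :
    Matrix (Fin (n + 1)) (Fin (n + 1)) R :=
  of (Fin.snoc (fun i => Fin.snoc (B i) 0) (Fin.snoc r 0))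

theorem snocLastRow_apply_eq_zero_of_le [Zero R] {B : Matrix (Fin n) (Fin n) R}
    (hB : ∀ i j, i ≤ j → B i j = 0) (r : Fin n → R) {i j : Fin (n + 1)} (hij : i ≤ j) :
    snocLastRow B r i j = 0 := by
  induction i using Fin.lastCases with
  | last => simp [Fin.last_le_iff.mp hij, snocLastRow]
  | cast i =>
    induction j using Fin.lastCases with
    | last => simp [snocLastRow]
    | cast j => simpa [snocLastRow] using hB i j (Fin.castSucc_le_castSucc_iff.mp hij)

theorem one_sub_snocLastRow_mulVec_snoc [CommRing R] (B : Matrix (Fin n) (Fin n) R)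
    (r y : Fin n → R) (t : R) :
    (1 - snocLastRow B r) *ᵥ Fin.snoc y t = Fin.snoc ((1 - B) *ᵥ y) (t - r ⬝ᵥ y) := by
  ext i
  simp only [sub_mulVec, one_mulVec]
  induction i using Fin.lastCases <;> simp [mulVec, snocLastRow, snoc_dotProduct_snoc]

theorem PosSemidef.exists_ldl {Q : Matrix (Fin n) (Fin n) ℝ} (hQ : Q.PosSemidef) :
    ∃ (B : Matrix (Fin n) (Fin n) ℝ) (d : Fin n → ℝ),
      (∀ i j, i ≤ j → B i j = 0) ∧ 0 ≤ d ∧ Q = (1 - B)ᵀ * diagonal d * (1 - B) := by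
  induction n with
  | zero => exact ⟨0, 0, fun i => i.elim0, le_rfl, Subsingleton.elim _ _⟩
  | succ n ih =>
    have hsymm : Q.IsSymm := hQ.isHermitian
    obtain ⟨v, hv⟩ := hQ.exists_col_eq_diag_mul (Fin.last n)
    replace hv : ∀ i : Fin n, Q i.castSucc (Fin.last n) =
        Q (Fin.last n) (Fin.last n) * (v ∘ Fin.castSucc) i := fun i => hv i.castSucc
    obtain ⟨B, d, hB, hd, hS⟩ := ih (hQ.submatrix_castSucc_sub_smul_vecMulVec hv)
    refine ⟨snocLastRow B (-(v ∘ Fin.castSucc)), Fin.snoc d (Q (Fin.last n) (Fin.last n)),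
      fun i j => snocLastRow_apply_eq_zero_of_le hB _, ?_, ext_of_dotProduct_mulVec fun x y => ?_⟩
    · intro i
      induction i using Fin.lastCases with
      | last => simpa using hQ.diag_nonneg
      | cast i => simpa using hd i
    · rw [← Fin.snoc_init_self x, ← Fin.snoc_init_self y,
        snoc_dotProduct_mulVec_snoc_of_col_eq hsymm hv, hS,
        dotProduct_mulVec_transpose_mul_diagonal_mul, dotProduct_mulVec_transpose_mul_diagonal_mul,
        one_sub_snocLastRow_mulVec_snoc, one_sub_snocLastRow_mulVec_snoc]
      simp only [Fin.sum_univ_castSucc, Fin.snoc_castSucc, Fin.snoc_last, neg_dotProduct,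
        sub_neg_eq_add]
      ring

end Matrix

/-- For any positive semidefinite real matrix `Q` there exist a permutation matrix `P`,
a strictly lower triangular matrix `B` and a diagonal matrix `F` with non-negative diagonal
entries such that `P Q Pᵀ = (I - B)ᵀ F (I - B)`. -/
theorem dagar_intrinsic_cholesky {k : ℕ} (Q : Matrix (Fin k) (Fin k) ℝ)
    (hQ : Q.PosSemidef) :
    ∃ (σ : Equiv.Perm (Fin k)) (B F : Matrix (Fin k) (Fin k) ℝ),
      (∀ i j : Fin k, i ≤ j → B i j = 0) ∧
      (∀ i j : Fin k, i ≠ j → F i j = 0) ∧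
      (∀ i : Fin k, 0 ≤ F i i) ∧
      (σ.permMatrix ℝ) * Q * (σ.permMatrix ℝ)ᵀ = (1 - B)ᵀ * F * (1 - B) := by
  obtain ⟨B, d, hB, hd, hQd⟩ := hQ.exists_ldl
  refine ⟨1, B, diagonal d, hB, fun i j => diagonal_apply_ne d, fun i => by simpa using hd i, ?_⟩
  rw [permMatrix_one, transpose_one, Matrix.one_mul, Matrix.mul_one, hQd]
end

section
/- Let T be a finite tree on k vertices with graph distance d(i,j), and 0 ≤ ρ < 1. Then the k×k matrix M with entries M_{ij} = ρ^{d(i,j)} is positive definite. -/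
/-!
Removing a leaf `v` with neighbour `u` from a tree leaves a tree with the same distances, and
`d(v, j) = d(u, j) + 1` for every other vertex `j`, so the row of `v` in `M = (ρ ^ d(i, j))`
is `ρ` times the row of `u`. With `a = x v` and `y = x|_{V ∖ {v}} + ρ a e_u` this splits the
quadratic form as `xᵀ M x = yᵀ M' y + (1 - ρ²) a²`, where `M'` is the matrix of the smaller
tree, and positive definiteness follows by induction on the number of vertices.
-/

namespace Matrix

variable {V : Type*} [Fintype V] [DecidableEq V]

lemma dotProduct_mulVec_eq_of_row_eq_smul_row {M : Matrix V V ℝ} (hM : M.IsSymm) {v : V}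
    (u : {i // i ≠ v}) {ρ : ℝ} (hvv : M v v = 1) (huu : M u u = 1)
    (hrow : ∀ j ≠ v, M v j = ρ * M u j) (x : V → ℝ) :
    let y : {i // i ≠ v} → ℝ := x ∘ (↑) + (ρ * x v) • Pi.single u 1
    x ⬝ᵥ M *ᵥ x = y ⬝ᵥ M.submatrix (↑) (↑) *ᵥ y + (1 - ρ ^ 2) * x v ^ 2 := by
  set A := M.submatrix (Subtype.val : {i // i ≠ v} → V) Subtype.val
  set x' : {i // i ≠ v} → ℝ := x ∘ Subtype.val
  intro y
  have hMx : x ⬝ᵥ M *ᵥ x =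
      x v ^ 2 + ρ * x v * (A *ᵥ x') u + ρ * x v * (A *ᵥ x') u + x' ⬝ᵥ A *ᵥ x' := by
    have hcol : ∀ i : {i // i ≠ v}, M i v = ρ * M u i := fun i => by
      rw [hM.apply v i, hrow i i.2]
    simp only [dotProduct, mulVec, Fintype.sum_eq_add_sum_subtype_ne _ v, hvv, hcol,
      fun i : {i // i ≠ v} => hrow i i.2, A, x', submatrix_apply, Function.comp_apply,
      mul_add, Finset.mul_sum, Finset.sum_add_distrib, mul_comm, mul_assoc, mul_left_comm]
    ring
  have hAy : y ⬝ᵥ A *ᵥ y =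
      x' ⬝ᵥ A *ᵥ x' + ρ * x v * (A *ᵥ x') u + ρ * x v * (A *ᵥ x') u +
        ρ ^ 2 * x v ^ 2 := by
    have hx'e : x' ⬝ᵥ A *ᵥ Pi.single u 1 = (A *ᵥ x') u := by
      rw [← dotProduct_transpose_mulVec, hM.submatrix, single_one_dotProduct]
    have he : Pi.single u 1 ⬝ᵥ A *ᵥ Pi.single u 1 = 1 := by
      rw [single_one_dotProduct, mulVec_single_one, col_apply]; exact huu
    simp only [y, mulVec_add, mulVec_smul, dotProduct_add, add_dotProduct, smul_dotProduct,
      dotProduct_smul, hx'e, he, single_one_dotProduct, smul_eq_mul]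
    ring
  linear_combination hMx - hAy

theorem posDef_of_row_eq_smul_row {M : Matrix V V ℝ} (hM : M.IsSymm) {v : V}
    (u : {i // i ≠ v}) {ρ : ℝ} (hρ : |ρ| < 1) (hvv : M v v = 1) (huu : M u u = 1)
    (hrow : ∀ j ≠ v, M v j = ρ * M u j)
    (hA : (M.submatrix ((↑) : {i // i ≠ v} → V) (↑)).PosDef) : M.PosDef := by
  refine .of_dotProduct_mulVec_pos (isHermitian_iff_isSymm.mpr hM) fun x hx => ?_
  have hρ2 : 0 < 1 - ρ ^ 2 := sub_pos.mpr ((sq_lt_one_iff_abs_lt_one ρ).mpr hρ)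
  rw [star_trivial, dotProduct_mulVec_eq_of_row_eq_smul_row hM u hvv huu hrow x]
  by_cases hxv : x v = 0
  · have hx' : x ∘ (↑) ≠ (0 : {i // i ≠ v} → ℝ) := fun h => hx <| funext fun i => by
      by_cases hi : i = v
      · rw [hi, hxv]; rfl
      · exact congrFun h ⟨i, hi⟩
    simpa [hxv, star_trivial] using hA.dotProduct_mulVec_pos hx'
  · have := hA.posSemidef.dotProduct_mulVec_nonneg (x ∘ (↑) + (ρ * x v) • Pi.single u 1)
    rw [star_trivial] at this
    positivity
end Matrix

namespace SimpleGraph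

variable {V : Type*} {G : SimpleGraph V} {u v : V}

lemma Connected.dist_eq_dist_add_one_of_subsingleton_neighborSet (hG : G.Connected)
    (hadj : G.Adj v u) (hv : (G.neighborSet v).Subsingleton) {j : V} (hj : j ≠ v) :
    G.dist v j = G.dist u j + 1 := by
  refine le_antisymm ?_ ?_
  · simpa [dist_eq_one_iff_adj.mpr hadj, add_comm] using
      hG.dist_triangle (v := u) (u := v) (w := j)
  · obtain ⟨p, -, hp⟩ := hG.exists_path_of_dist v j
    have hnil : ¬p.Nil := Walk.not_nil_of_ne hj.symm
    have hsnd : p.snd = u := hv (p.adj_snd hnil) hadj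
    calc G.dist u j + 1 = G.dist p.snd j + 1 := by rw [hsnd]
      _ ≤ p.tail.length + 1 := by gcongr; exact dist_le _
      _ = G.dist v j := by rw [Walk.length_tail_add_one hnil, hp]

lemma dist_induce_compl_singleton (hG : G.Connected) (hv : (G.neighborSet v).Subsingleton)
    (i j : ({v}ᶜ : Set V)) : (G.induce {v}ᶜ).dist i j = G.dist i j := by
  refine le_antisymm ?_ ?_
  · obtain ⟨p, hp, hlen⟩ := hG.exists_path_of_dist i j
    have hpv : ∀ w ∈ p.support, w ∈ ({v}ᶜ : Set V) := fun w hw hwv => by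
      rw [Set.mem_singleton_iff] at hwv
      subst hwv
      exact hp.isTrail.not_mem_support_of_subsingleton_neighborSet (Ne.symm i.2) (Ne.symm j.2) hv hw
    calc (G.induce {v}ᶜ).dist i j ≤ (p.induce {v}ᶜ hpv).length := dist_le _
      _ = G.dist i j := by
        rw [← hlen, ← Walk.length_map (Embedding.induce {v}ᶜ).toHom, Walk.map_induce]; rfl
  · obtain ⟨q, hq⟩ := ((hG.preconnected.induce_of_degree_eq_one (s := {v}ᶜ)
      (fun w hw => by simp_all)) i j).exists_walk_length_eq_dist
    calc G.dist i j ≤ (q.map (Embedding.induce {v}ᶜ).toHom).length := dist_le _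
      _ = _ := by rw [Walk.length_map, hq]

theorem IsTree.posDef_pow_dist [Fintype V] (hG : G.IsTree) {ρ : ℝ} (hρ : |ρ| < 1) :
    (Matrix.of fun i j : V => ρ ^ G.dist i j).PosDef := by
  revert G
  refine Finite.induction_subsingleton_or_nontrivial (P := fun V => ∀ [Fintype V]
    {G : SimpleGraph V}, G.IsTree → (Matrix.of fun i j : V => ρ ^ G.dist i j).PosDef) V ?_ ?_
  · intro V _ _ _ G _
    classical
    convert Matrix.PosDef.one (n := V) (R := ℝ)
    ext i j
    obtain rfl := Subsingleton.elim i j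
    simp
  · intro V _ _ ih _ G hG
    classical
    obtain ⟨v, hv⟩ := hG.exists_vert_degree_one_of_nontrivial
    have hleaf := degree_eq_one_iff_existsUnique_adj.mp hv
    have hsub : (G.neighborSet v).Subsingleton := fun a ha b hb => hleaf.unique ha hb
    obtain ⟨u, hvu, -⟩ := hleaf
    have hT : (G.induce {v}ᶜ).IsTree :=
      ⟨hG.connected.induce_compl_singleton_of_degree_eq_one hv, hG.isAcyclic.induce _⟩
    refine Matrix.posDef_of_row_eq_smul_row (.ext fun i j => by simp [dist_comm]) ⟨u, hvu.ne'⟩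
      hρ (by simp) (by simp) (fun j hj => ?_) ?_
    · simp [hG.connected.dist_eq_dist_add_one_of_subsingleton_neighborSet hvu hsub hj, pow_succ,
        mul_comm]
    · convert ih {i // i ≠ v} (Finite.card_subtype_lt (p := (· ≠ v)) (x := v) (by simp)) hT
      ext i j
      exact congrArg (ρ ^ ·) (dist_induce_compl_singleton hG.connected hsub i j).symm

end SimpleGraph

/-- For a finite tree `T` on `k` vertices with graph distance `d`, and `0 ≤ ρ < 1`,
the matrix `M` with `M i j = ρ^(d i j)` is positive definite. -/
theorem tree_ar1_posDef {k : ℕ} (G : SimpleGraph (Fin k)) (hconn : G.Connected)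
    (hacyclic : G.IsAcyclic) (ρ : ℝ) (h0 : 0 ≤ ρ) (h1 : ρ < 1) :
    (Matrix.of fun i j : Fin k => ρ ^ G.dist i j).PosDef :=
  SimpleGraph.IsTree.posDef_pow_dist ⟨hconn, hacyclic⟩ (abs_lt.mpr ⟨by linarith, h1⟩)
end

section
/- Let G be the m×n grid graph with vertices (i,j), 1 ≤ i ≤ m, 1 ≤ j ≤ n, where (i,j) ~ (i',j') iff |i-i'|+|j-j'| = 1. Order the vertices in non-decreasing order of i+j, and define the DAGAR Gaussian model: w_{(i,j)} given its earlier neighbors w_{N(i,j)} (with n_{(i,j)} = |N(i,j)| earlier neighbors) has conditional mean (ρ/(1+(n_{(i,j)}-1)ρ²))·Σ_{(i',j') ∈ N(i,j)} w_{(i',j')} and conditional variance (1-ρ²)/(1+(n_{(i,j)}-1)ρ²), for 0 ≤ ρ < 1. Then Var(w_{(i,j)}) = 1 for all (i,j), and Cov(w_{(i,j)}, w_{(i',j')}) = ρ for every pair of neighboring vertices. -/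
open Matrix BigOperators Finset
open scoped Classical

/-- The set of directed neighbours of `v`: neighbours of `v` in `G` preceding `v`
in the ordering given by the rank function `ord`. -/
noncomputable def dagarN {V : Type*} [Fintype V] [DecidableEq V] (G : SimpleGraph V)
    (ord : V → ℕ) (v : V) : Finset V :=
  Finset.univ.filter (fun u => G.Adj v u ∧ ord u < ord v)

/-- The DAGAR autoregression coefficient matrix `B`:
`B v u = ρ/(1+(n_v-1)ρ²)` if `u` is a directed neighbour of `v` (with `n_v` the number of
directed neighbours of `v`), and `0` otherwise. -/
noncomputable def dagarB {V : Type*} [Fintype V] [DecidableEq V] (G : SimpleGraph V)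
    (ord : V → ℕ) (ρ : ℝ) : Matrix V V ℝ :=
  Matrix.of fun v u =>
    if u ∈ dagarN G ord v then ρ / (1 + (((dagarN G ord v).card : ℝ) - 1) * ρ ^ 2) else 0

/-- The DAGAR diagonal matrix of conditional precisions `τ_v = (1+(n_v-1)ρ²)/(1-ρ²)`. -/
noncomputable def dagarF {V : Type*} [Fintype V] [DecidableEq V] (G : SimpleGraph V)
    (ord : V → ℕ) (ρ : ℝ) : Matrix V V ℝ :=
  Matrix.diagonal fun v => (1 + (((dagarN G ord v).card : ℝ) - 1) * ρ ^ 2) / (1 - ρ ^ 2)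

/-- The DAGAR precision matrix `Q = (I-B)ᵀ F (I-B)` for the ordering `ord`. -/
noncomputable def dagarQ {V : Type*} [Fintype V] [DecidableEq V] (G : SimpleGraph V)
    (ord : V → ℕ) (ρ : ℝ) : Matrix V V ℝ :=
  (1 - dagarB G ord ρ)ᵀ * dagarF G ord ρ * (1 - dagarB G ord ρ)

/-- The order-free DAGAR precision matrix: the average of the DAGAR precision matrices
over all `k!` orderings (permutations) of the vertices. -/
noncomputable def dagarOF {V : Type*} [Fintype V] [DecidableEq V] (G : SimpleGraph V)
    (ρ : ℝ) : Matrix V V ℝ :=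
  ((Nat.factorial (Fintype.card V) : ℝ))⁻¹ •
    ∑ π : Equiv.Perm V, dagarQ G (fun v => ((Fintype.equivFin V) (π v) : ℕ)) ρ

/-- The `m × n` grid graph: vertices `(i,j)` are adjacent iff their Manhattan distance
is `1`. -/
def gridGraph (m n : ℕ) : SimpleGraph (Fin m × Fin n) :=
  SimpleGraph.fromRel (fun v u =>
    ((v.1 : ℤ) - (u.1 : ℤ)).natAbs + ((v.2 : ℤ) - (u.2 : ℤ)).natAbs = 1)

/-! ### Auxiliary development: the explicit covariance function -/

namespace DagarAux

/-- Covariance at a "same-sign" offset `(a,b)`, defined by the interior recursion. -/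
noncomputable def Fc (ρ : ℝ) : ℕ → ℕ → ℝ
  | 0, b => ρ ^ b
  | a+1, 0 => ρ ^ (a+1)
  | a+1, b+1 => ρ / (1 + ρ^2) * (Fc ρ a (b+1) + Fc ρ (a+1) b)

/-- Covariance as a function of the integer offset `(di, dj)`. -/
noncomputable def fc (ρ : ℝ) (di dj : ℤ) : ℝ :=
  if 0 < di * dj then Fc ρ di.natAbs dj.natAbs else ρ ^ (di.natAbs + dj.natAbs)

variable {ρ : ℝ}

lemma Fc_zero_left (b : ℕ) : Fc ρ 0 b = ρ ^ b := by rw [Fc]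

lemma Fc_zero_right (a : ℕ) : Fc ρ a 0 = ρ ^ a := by
  cases a with
  | zero => rw [Fc]
  | succ a => rw [Fc]

lemma fc_self (di dj : ℤ) : fc ρ (-di) (-dj) = fc ρ di dj := by
  unfold fc
  rw [neg_mul_neg, Int.natAbs_neg, Int.natAbs_neg]

lemma fc_mixed {di dj : ℤ} (h1 : 0 ≤ di) (h2 : dj ≤ 0) :
    fc ρ di dj = ρ ^ (di.toNat + (-dj).toNat) := by
  unfold fc
  rw [if_neg (by nlinarith)]
  congr 1
  omega

lemma fc_mixed' {di dj : ℤ} (h1 : di ≤ 0) (h2 : 0 ≤ dj) :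
    fc ρ di dj = ρ ^ ((-di).toNat + dj.toNat) := by
  rw [← fc_self]
  rw [fc_mixed (by omega) (by omega)]
  congr 1
  omega

lemma fc_F {di dj : ℤ} (h1 : 0 ≤ di) (h2 : 0 ≤ dj) :
    fc ρ di dj = Fc ρ di.toNat dj.toNat := by
  unfold fc
  rcases eq_or_lt_of_le h1 with h | h
  · rw [if_neg (by nlinarith), ← h]
    simp [Fc_zero_left]
    congr 1
    omega
  rcases eq_or_lt_of_le h2 with h' | h'
  · rw [if_neg (by nlinarith), ← h']
    simp [Fc_zero_right]
    congr 1
    omega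
  · rw [if_pos (by positivity)]
    congr 1 <;> omega

lemma fc_key1h {di dj : ℤ} (h1 : 1 ≤ di) (h2 : dj ≤ 0) :
    fc ρ di dj = ρ * fc ρ (di - 1) dj := by
  rw [fc_mixed (by omega) h2, fc_mixed (by omega) h2]
  have : di.toNat + (-dj).toNat = ((di - 1).toNat + (-dj).toNat) + 1 := by omega
  rw [this, pow_succ]
  ring

lemma fc_key1v {di dj : ℤ} (h1 : di ≤ 0) (h2 : 1 ≤ dj) :
    fc ρ di dj = ρ * fc ρ di (dj - 1) := by
  rw [fc_mixed' h1 (by omega), fc_mixed' h1 (by omega)]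
  have : (-di).toNat + dj.toNat = ((-di).toNat + (dj - 1).toNat) + 1 := by omega
  rw [this, pow_succ]
  ring

lemma fc_key2 (hρ : (1 : ℝ) + ρ ^ 2 ≠ 0) {di dj : ℤ}
    (h : 0 ≤ di + dj) (hne : ¬(di = 0 ∧ dj = 0)) :
    fc ρ di dj = ρ / (1 + ρ ^ 2) * (fc ρ (di - 1) dj + fc ρ di (dj - 1)) := by
  rcases le_or_gt 1 di with hdi | hdi
  · rcases le_or_gt 1 dj with hdj | hdj
    · rw [fc_F (by omega) (by omega), fc_F (by omega) (by omega),
        fc_F (by omega) (by omega)]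
      have ha : di.toNat = (di - 1).toNat + 1 := by omega
      have hb : dj.toNat = (dj - 1).toNat + 1 := by omega
      rw [ha, hb, Fc, ← ha, ← hb]
    · have hdj' : dj ≤ 0 := by omega
      rw [fc_mixed (by omega) hdj', fc_mixed (by omega) hdj',
        fc_mixed (by omega) (by omega)]
      have e0 : di.toNat + (-dj).toNat = ((di - 1).toNat + (-dj).toNat) + 1 := by omega
      have e2 : di.toNat + (-(dj - 1)).toNat = ((di - 1).toNat + (-dj).toNat) + 2 := by omega
      rw [e0, e2, div_mul_eq_mul_div, eq_div_iff hρ]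
      ring
  · rcases le_or_gt 1 dj with hdj | hdj
    · have hdi' : di ≤ 0 := by omega
      rw [fc_mixed' hdi' (by omega), fc_mixed' (by omega) (by omega),
        fc_mixed' hdi' (by omega)]
      have e0 : (-di).toNat + dj.toNat = ((-di).toNat + (dj - 1).toNat) + 1 := by omega
      have e2 : (-(di - 1)).toNat + dj.toNat = ((-di).toNat + (dj - 1).toNat) + 2 := by omega
      rw [e0, e2, div_mul_eq_mul_div, eq_div_iff hρ]
      ring
    · omega

/-! ### Grid lemmas -/

variable {m n : ℕ}

lemma grid_adj (v u : Fin m × Fin n) :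
    (gridGraph m n).Adj v u ↔
      ((v.1 : ℤ) - (u.1 : ℤ)).natAbs + ((v.2 : ℤ) - (u.2 : ℤ)).natAbs = 1 := by
  rw [gridGraph, SimpleGraph.fromRel_adj]
  constructor
  · rintro ⟨hne, h | h⟩
    · exact h
    · omega
  · intro h
    refine ⟨fun he => ?_, Or.inl h⟩
    subst he; simp at h

/-- The diagonal ordering. -/
abbrev gOrd : Fin m × Fin n → ℕ := fun v => (v.1 : ℕ) + (v.2 : ℕ)

lemma mem_gridN (v u : Fin m × Fin n) :
    u ∈ dagarN (gridGraph m n) gOrd v ↔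
      (((v.1 : ℤ) - (u.1 : ℤ)).natAbs + ((v.2 : ℤ) - (u.2 : ℤ)).natAbs = 1
        ∧ (u.1 : ℕ) + (u.2 : ℕ) < (v.1 : ℕ) + (v.2 : ℕ)) := by
  simp [dagarN, grid_adj]

lemma gridN_00 (v : Fin m × Fin n) (h1 : (v.1 : ℕ) = 0) (h2 : (v.2 : ℕ) = 0) :
    dagarN (gridGraph m n) gOrd v = ∅ := by
  ext u
  simp only [mem_gridN, Finset.notMem_empty, iff_false]
  omega

lemma gridN_i0 (v : Fin m × Fin n) (h1 : 0 < (v.1 : ℕ)) (h2 : (v.2 : ℕ) = 0) :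
    dagarN (gridGraph m n) gOrd v = {(⟨(v.1 : ℕ) - 1, by omega⟩, v.2)} := by
  ext u
  simp only [mem_gridN, Finset.mem_singleton, Prod.ext_iff, Fin.ext_iff]
  omega

lemma gridN_0j (v : Fin m × Fin n) (h1 : (v.1 : ℕ) = 0) (h2 : 0 < (v.2 : ℕ)) :
    dagarN (gridGraph m n) gOrd v = {(v.1, ⟨(v.2 : ℕ) - 1, by omega⟩)} := by
  ext u
  simp only [mem_gridN, Finset.mem_singleton, Prod.ext_iff, Fin.ext_iff]
  omega

lemma gridN_ij (v : Fin m × Fin n) (h1 : 0 < (v.1 : ℕ)) (h2 : 0 < (v.2 : ℕ)) :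
    dagarN (gridGraph m n) gOrd v =
      {(⟨(v.1 : ℕ) - 1, by omega⟩, v.2), (v.1, ⟨(v.2 : ℕ) - 1, by omega⟩)} := by
  ext u
  simp only [mem_gridN, Finset.mem_insert, Finset.mem_singleton, Prod.ext_iff, Fin.ext_iff]
  omega

/-- The candidate covariance matrix. -/
noncomputable def Sm (m n : ℕ) (ρ : ℝ) : Matrix (Fin m × Fin n) (Fin m × Fin n) ℝ :=
  Matrix.of fun v u => fc ρ ((v.1 : ℤ) - (u.1 : ℤ)) ((v.2 : ℤ) - (u.2 : ℤ))

lemma Sm_transpose : (Sm m n ρ)ᵀ = Sm m n ρ := by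
  ext v u
  show fc ρ ((u.1 : ℤ) - (v.1 : ℤ)) ((u.2 : ℤ) - (v.2 : ℤ))
      = fc ρ ((v.1 : ℤ) - (u.1 : ℤ)) ((v.2 : ℤ) - (u.2 : ℤ))
  rw [show ((u.1 : ℤ) - (v.1 : ℤ)) = -((v.1 : ℤ) - (u.1 : ℤ)) by ring,
    show ((u.2 : ℤ) - (v.2 : ℤ)) = -((v.2 : ℤ) - (u.2 : ℤ)) by ring, fc_self]

/-- The conditional mean coefficient. -/
noncomputable def bcoef (m n : ℕ) (ρ : ℝ) (v : Fin m × Fin n) : ℝ :=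
  ρ / (1 + (((dagarN (gridGraph m n) gOrd v).card : ℝ) - 1) * ρ ^ 2)

/-- The conditional variance. -/
noncomputable def dval (m n : ℕ) (ρ : ℝ) (v : Fin m × Fin n) : ℝ :=
  (1 - ρ ^ 2) / (1 + (((dagarN (gridGraph m n) gOrd v).card : ℝ) - 1) * ρ ^ 2)

lemma row_left (A : Matrix (Fin m × Fin n) (Fin m × Fin n) ℝ) (v u : Fin m × Fin n) :
    ((1 - dagarB (gridGraph m n) gOrd ρ) * A) v u
      = A v u - ∑ w ∈ dagarN (gridGraph m n) gOrd v, bcoef m n ρ v * A w u := by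
  rw [Matrix.mul_apply]
  have h1 : ∀ w, (1 - dagarB (gridGraph m n) gOrd ρ) v w * A w u
      = (if v = w then A w u else 0)
        - (if w ∈ dagarN (gridGraph m n) gOrd v then bcoef m n ρ v * A w u else 0) := by
    intro w
    simp only [Matrix.sub_apply, Matrix.one_apply, dagarB, Matrix.of_apply, sub_mul,
      ite_mul, one_mul, zero_mul, bcoef]
  rw [Finset.sum_congr rfl (fun w _ => h1 w), Finset.sum_sub_distrib,
    Finset.sum_ite_eq Finset.univ v (fun w => A w u), if_pos (Finset.mem_univ v),
    Finset.sum_ite_mem, Finset.univ_inter]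

lemma row_right (A : Matrix (Fin m × Fin n) (Fin m × Fin n) ℝ) (v u : Fin m × Fin n) :
    ((A * (1 - dagarB (gridGraph m n) gOrd ρ)ᵀ :
        Matrix (Fin m × Fin n) (Fin m × Fin n) ℝ)) v u
      = A v u - ∑ w ∈ dagarN (gridGraph m n) gOrd u, bcoef m n ρ u * A v w := by
  rw [Matrix.mul_apply]
  have h1 : ∀ w, A v w * (1 - dagarB (gridGraph m n) gOrd ρ)ᵀ w u
      = (if u = w then A v w else 0)
        - (if w ∈ dagarN (gridGraph m n) gOrd u then bcoef m n ρ u * A v w else 0) := by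
    intro w
    simp only [Matrix.transpose_apply, Matrix.sub_apply, Matrix.one_apply, dagarB,
      Matrix.of_apply, mul_sub, mul_ite, mul_one, mul_zero, bcoef]
    ring_nf
  rw [Finset.sum_congr rfl (fun w _ => h1 w), Finset.sum_sub_distrib,
    Finset.sum_ite_eq Finset.univ u (fun w => A v w), if_pos (Finset.mem_univ u),
    Finset.sum_ite_mem, Finset.univ_inter]

lemma fc_zero : fc ρ 0 0 = 1 := by simp [fc]

lemma fc_m10 : fc ρ (-1) 0 = ρ := by
  rw [fc_mixed' (by omega) (by omega)]
  norm_num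

lemma fc_0m1 : fc ρ 0 (-1) = ρ := by
  rw [fc_mixed (by omega) (by omega)]
  norm_num

lemma E_zero (hρ : (1:ℝ) + ρ^2 ≠ 0) (v u : Fin m × Fin n)
    (hle : gOrd u ≤ gOrd v) (hne : u ≠ v) :
    ((1 - dagarB (gridGraph m n) gOrd ρ) * Sm m n ρ) v u = 0 := by
  rw [row_left]
  obtain ⟨⟨i, hi⟩, ⟨j, hj⟩⟩ := v
  obtain ⟨⟨i', hi'⟩, ⟨j', hj'⟩⟩ := u
  simp only [ne_eq, Prod.mk.injEq, Fin.mk.injEq] at hne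
  simp only [gOrd] at hle
  rcases Nat.eq_zero_or_pos i with hi0 | hip <;> rcases Nat.eq_zero_or_pos j with hj0 | hjp
  · exfalso
    omega
  · -- i = 0, 0 < j : single neighbour below
    simp only [bcoef]
    rw [gridN_0j _ hi0 hjp, Finset.sum_singleton, Finset.card_singleton]
    simp only [Sm, Matrix.of_apply]
    have hco : ρ / (1 + (((1:ℕ):ℝ) - 1) * ρ ^ 2) = ρ := by norm_num
    rw [hco]
    have cj : ((j - 1 : ℕ) : ℤ) = (j:ℤ) - 1 := by omega
    rw [cj]
    have key := fc_key1v (ρ := ρ) (di := (i:ℤ) - i') (dj := (j:ℤ) - j')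
      (by omega) (by omega)
    rw [show ((j:ℤ) - j') - 1 = (j:ℤ) - 1 - j' by ring] at key
    rw [sub_eq_zero]
    exact key
  · -- 0 < i, j = 0
    simp only [bcoef]
    rw [gridN_i0 _ hip hj0, Finset.sum_singleton, Finset.card_singleton]
    simp only [Sm, Matrix.of_apply]
    have hco : ρ / (1 + (((1:ℕ):ℝ) - 1) * ρ ^ 2) = ρ := by norm_num
    rw [hco]
    have ci : ((i - 1 : ℕ) : ℤ) = (i:ℤ) - 1 := by omega
    rw [ci]
    have key := fc_key1h (ρ := ρ) (di := (i:ℤ) - i') (dj := (j:ℤ) - j')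
      (by omega) (by omega)
    rw [show ((i:ℤ) - i') - 1 = (i:ℤ) - 1 - i' by ring] at key
    rw [sub_eq_zero]
    exact key
  · -- interior
    simp only [bcoef]
    rw [gridN_ij _ hip hjp, Finset.sum_insert (by
      simp only [Finset.mem_singleton, Prod.ext_iff, Fin.ext_iff]
      omega), Finset.sum_singleton, Finset.card_insert_of_notMem (by
      simp only [Finset.mem_singleton, Prod.ext_iff, Fin.ext_iff]
      omega), Finset.card_singleton]
    simp only [Sm, Matrix.of_apply]
    have hco : ρ / (1 + (((2:ℕ):ℝ) - 1) * ρ ^ 2) = ρ / (1 + ρ ^ 2) := by norm_num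
    rw [hco]
    have ci : ((i - 1 : ℕ) : ℤ) = (i:ℤ) - 1 := by omega
    have cj : ((j - 1 : ℕ) : ℤ) = (j:ℤ) - 1 := by omega
    rw [ci, cj]
    have key := fc_key2 (ρ := ρ) hρ (di := (i:ℤ) - i') (dj := (j:ℤ) - j')
      (by omega) (by omega)
    rw [show ((i:ℤ) - i') - 1 = (i:ℤ) - 1 - i' by ring,
      show ((j:ℤ) - j') - 1 = (j:ℤ) - 1 - j' by ring] at key
    rw [sub_eq_zero]
    rw [key]
    ring

lemma E_diag (hm : (1:ℝ) - ρ^2 ≠ 0) (hρ : (1:ℝ) + ρ^2 ≠ 0) (v : Fin m × Fin n) :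
    ((1 - dagarB (gridGraph m n) gOrd ρ) * Sm m n ρ) v v = dval m n ρ v := by
  rw [row_left]
  obtain ⟨⟨i, hi⟩, ⟨j, hj⟩⟩ := v
  rcases Nat.eq_zero_or_pos i with hi0 | hip <;> rcases Nat.eq_zero_or_pos j with hj0 | hjp
  · simp only [bcoef, dval]
    rw [gridN_00 _ hi0 hj0, Finset.sum_empty, Finset.card_empty]
    simp only [Sm, Matrix.of_apply, sub_self, fc_zero, sub_zero]
    rw [show (1:ℝ) + (((0:ℕ):ℝ) - 1) * ρ ^ 2 = 1 - ρ^2 by push_cast; ring,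
      div_self hm]
  · simp only [bcoef, dval]
    rw [gridN_0j _ hi0 hjp, Finset.sum_singleton, Finset.card_singleton]
    simp only [Sm, Matrix.of_apply, sub_self, fc_zero]
    have cj : ((j - 1 : ℕ) : ℤ) = (j:ℤ) - 1 := by omega
    rw [cj, show ((j:ℤ) - 1 - j) = (-1:ℤ) by ring, fc_0m1]
    push_cast
    field_simp
    ring
  · simp only [bcoef, dval]
    rw [gridN_i0 _ hip hj0, Finset.sum_singleton, Finset.card_singleton]
    simp only [Sm, Matrix.of_apply, sub_self, fc_zero]
    have ci : ((i - 1 : ℕ) : ℤ) = (i:ℤ) - 1 := by omega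
    rw [ci, show ((i:ℤ) - 1 - i) = (-1:ℤ) by ring, fc_m10]
    push_cast
    field_simp
    ring
  · simp only [bcoef, dval]
    rw [gridN_ij _ hip hjp, Finset.sum_insert (by
      simp only [Finset.mem_singleton, Prod.ext_iff, Fin.ext_iff]
      omega), Finset.sum_singleton, Finset.card_insert_of_notMem (by
      simp only [Finset.mem_singleton, Prod.ext_iff, Fin.ext_iff]
      omega), Finset.card_singleton]
    simp only [Sm, Matrix.of_apply, sub_self, fc_zero]
    have ci : ((i - 1 : ℕ) : ℤ) = (i:ℤ) - 1 := by omega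
    have cj : ((j - 1 : ℕ) : ℤ) = (j:ℤ) - 1 := by omega
    rw [ci, cj, show ((i:ℤ) - 1 - i) = (-1:ℤ) by ring,
      show ((j:ℤ) - 1 - j) = (-1:ℤ) by ring, fc_m10, fc_0m1]
    push_cast
    field_simp
    ring

lemma Kmat (hm : (1:ℝ) - ρ^2 ≠ 0) (hρ : (1:ℝ) + ρ^2 ≠ 0) :
    (1 - dagarB (gridGraph m n) gOrd ρ) * Sm m n ρ
        * (1 - dagarB (gridGraph m n) gOrd ρ)ᵀ
      = Matrix.diagonal (dval m n ρ) := by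
  have hle : ∀ v u : Fin m × Fin n, gOrd u ≤ gOrd v →
      (((1 - dagarB (gridGraph m n) gOrd ρ) * Sm m n ρ
        * (1 - dagarB (gridGraph m n) gOrd ρ)ᵀ :
          Matrix (Fin m × Fin n) (Fin m × Fin n) ℝ)) v u
        = Matrix.diagonal (dval m n ρ) v u := by
    intro v u huv
    rw [row_right]
    have hz : ∀ w ∈ dagarN (gridGraph m n) gOrd u,
        bcoef m n ρ u * ((1 - dagarB (gridGraph m n) gOrd ρ) * Sm m n ρ) v w = 0 := by
      intro w hw
      have hw' : gOrd w < gOrd u := by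
        simp only [dagarN, Finset.mem_filter] at hw
        exact hw.2.2
      rw [E_zero hρ v w (by omega) (by
        intro h
        subst h
        omega)]
      ring
    rw [Finset.sum_eq_zero hz, sub_zero]
    by_cases h : u = v
    · subst h
      rw [E_diag hm hρ, Matrix.diagonal_apply_eq]
    · rw [E_zero hρ v u huv h, Matrix.diagonal_apply_ne' _ h]
  have hsymm : ((1 - dagarB (gridGraph m n) gOrd ρ) * Sm m n ρ
      * (1 - dagarB (gridGraph m n) gOrd ρ)ᵀ)ᵀ
      = (1 - dagarB (gridGraph m n) gOrd ρ) * Sm m n ρ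
        * (1 - dagarB (gridGraph m n) gOrd ρ)ᵀ := by
    rw [Matrix.transpose_mul, Matrix.transpose_mul, Matrix.transpose_transpose,
      Sm_transpose, Matrix.mul_assoc]
  ext v u
  rcases le_total (gOrd u) (gOrd v) with h | h
  · exact hle v u h
  · conv_lhs => rw [← hsymm]
    rw [Matrix.transpose_apply, hle u v h]
    by_cases hvu : v = u
    · subst hvu
      rfl
    · rw [Matrix.diagonal_apply_ne _ (fun h => hvu h.symm),
        Matrix.diagonal_apply_ne _ hvu]

lemma B_pow_eq_zero :
    dagarB (gridGraph m n) gOrd ρ ^ (m + n) = 0 := by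
  have key : ∀ k, ∀ v u : Fin m × Fin n, gOrd v < gOrd u + k →
      (dagarB (gridGraph m n) gOrd ρ ^ k) v u = 0 := by
    intro k
    induction k with
    | zero =>
      intro v u h
      rw [pow_zero]
      exact Matrix.one_apply_ne (by
        intro he
        rw [he] at h
        omega)
    | succ k ih =>
      intro v u h
      rw [pow_succ', Matrix.mul_apply]
      apply Finset.sum_eq_zero
      intro w _
      by_cases hw : w ∈ dagarN (gridGraph m n) gOrd v
      · have hw' : gOrd w < gOrd v := by
          simp only [dagarN, Finset.mem_filter] at hw
          exact hw.2.2
        rw [ih w u (by omega), mul_zero]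
      · simp only [dagarB, Matrix.of_apply, if_neg hw, zero_mul]
  ext v u
  apply key
  have h1 := v.1.isLt
  have h2 := v.2.isLt
  simp only [gOrd]
  omega

end DagarAux

/-- For the DAGAR model on the `m × n` grid graph, with vertices ordered in non-decreasing
order of `i + j` and `0 ≤ ρ < 1`, the covariance matrix `Q⁻¹` has unit diagonal
(`Var(w_{(i,j)}) = 1`) and every neighbouring pair has covariance `ρ`. -/
theorem dagar_grid_covariance (m n : ℕ) (ρ : ℝ) (h0 : 0 ≤ ρ) (h1 : ρ < 1) :
    (∀ v : Fin m × Fin n,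
        (dagarQ (gridGraph m n) (fun v => (v.1 : ℕ) + (v.2 : ℕ)) ρ)⁻¹ v v = 1)
      ∧ ∀ v u : Fin m × Fin n, (gridGraph m n).Adj v u →
          (dagarQ (gridGraph m n) (fun v => (v.1 : ℕ) + (v.2 : ℕ)) ρ)⁻¹ v u = ρ := by
  classical
  open DagarAux in
  have hρ2 : ρ ^ 2 < 1 := by nlinarith
  have hm : (1:ℝ) - ρ ^ 2 ≠ 0 := by nlinarith
  have hp : (1:ℝ) + ρ ^ 2 ≠ 0 := by nlinarith
  have hdd : ∀ v : Fin m × Fin n,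
      (1 + (((dagarN (gridGraph m n) gOrd v).card : ℝ) - 1) * ρ ^ 2) ≠ 0 := by
    intro v
    have : (0:ℝ) ≤ ((dagarN (gridGraph m n) gOrd v).card : ℝ) := Nat.cast_nonneg _
    nlinarith
  have hFD : dagarF (gridGraph m n) gOrd ρ * Matrix.diagonal (dval m n ρ) = 1 := by
    rw [dagarF, Matrix.diagonal_mul_diagonal, ← Matrix.diagonal_one]
    refine congrArg Matrix.diagonal (funext fun v => ?_)
    simp only [dval]
    rw [div_mul_div_comm, div_eq_one_iff_eq (mul_ne_zero hm (hdd v))]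
    ring
  have hnil : IsNilpotent (dagarB (gridGraph m n) gOrd ρ) := ⟨m + n, B_pow_eq_zero⟩
  have hunit : IsUnit (1 - dagarB (gridGraph m n) gOrd ρ) := hnil.isUnit_one_sub
  have hdet : IsUnit (1 - dagarB (gridGraph m n) gOrd ρ).det :=
    (Matrix.isUnit_iff_isUnit_det _).mp hunit
  have hdetT : IsUnit ((1 - dagarB (gridGraph m n) gOrd ρ)ᵀ).det := by
    rw [Matrix.det_transpose]
    exact hdet
  have hCS : (1 - dagarB (gridGraph m n) gOrd ρ) * Sm m n ρ
      = Matrix.diagonal (dval m n ρ) * ((1 - dagarB (gridGraph m n) gOrd ρ)ᵀ)⁻¹ := by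
    calc (1 - dagarB (gridGraph m n) gOrd ρ) * Sm m n ρ
        = (1 - dagarB (gridGraph m n) gOrd ρ) * Sm m n ρ
            * (1 - dagarB (gridGraph m n) gOrd ρ)ᵀ
            * ((1 - dagarB (gridGraph m n) gOrd ρ)ᵀ)⁻¹ :=
          (Matrix.mul_nonsing_inv_cancel_right _ _ hdetT).symm
      _ = Matrix.diagonal (dval m n ρ) * ((1 - dagarB (gridGraph m n) gOrd ρ)ᵀ)⁻¹ := by
          rw [Kmat hm hp]
  have hQS : dagarQ (gridGraph m n) gOrd ρ * Sm m n ρ = 1 := by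
    rw [dagarQ, Matrix.mul_assoc ((1 - dagarB (gridGraph m n) gOrd ρ)ᵀ * dagarF (gridGraph m n) gOrd ρ),
      hCS, ← Matrix.mul_assoc, Matrix.mul_assoc ((1 - dagarB (gridGraph m n) gOrd ρ)ᵀ),
      hFD, Matrix.mul_one]
    exact Matrix.mul_nonsing_inv _ hdetT
  have hinv : (dagarQ (gridGraph m n) gOrd ρ)⁻¹ = Sm m n ρ :=
    Matrix.inv_eq_right_inv hQS
  constructor
  · intro v
    rw [hinv]
    simp only [Sm, Matrix.of_apply, sub_self, fc_zero]
  · intro v u hadj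
    rw [hinv]
    rw [grid_adj] at hadj
    simp only [Sm, Matrix.of_apply]
    set di := (v.1 : ℤ) - (u.1 : ℤ) with hdi
    set dj := (v.2 : ℤ) - (u.2 : ℤ) with hdj
    unfold fc
    rw [if_neg (by
      intro hpos
      rcases (by omega : di = 0 ∨ dj = 0) with h | h <;> rw [h] at hpos <;> simp at hpos),
      hadj, pow_one]
end

section
/- Let G be a finite graph on k vertices, i a vertex with n_i neighbors, and let a uniformly random permutation π of the k vertices be given. Let n_π(i) be the number of neighbors of i preceding i in π. Then for each r ∈ {0, 1, …, n_i}, the probability that n_π(i) = r equals 1/(n_i + 1); equivalently, the number of permutations π with n_π(i) = r is k!/(n_i + 1). -/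
/-!
Put `s = {i} ∪ N(i)`. Composing `π` with the transposition of two vertices of `s` exchanges
their ranks within `s` (ranks taken in the order `π⁻¹`), so the number of orderings in which a
vertex of `s` has rank `r` is the same for every vertex of `s`. Summing over `s`, every ordering
is counted exactly once, because ranks within `s` are a bijection onto `{0, …, |s| - 1}`. Hence
`|s|` times the count is `k!`, and the rank of `i` in `s` is `n_π(i)`.
-/

open Finset

namespace Finset

variable {α β : Type*} [LinearOrder β]

def rankIn (s : Finset α) (f : α → β) (x : α) : ℕ := #{y ∈ s | f y < f x}

variable {s : Finset α} {f : α → β}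

lemma rankIn_comp_perm {τ : Equiv.Perm α} (hτ : ∀ x, τ x ∈ s ↔ x ∈ s) (x : α) :
    rankIn s (f ∘ τ) x = rankIn s f (τ x) :=
  card_equiv τ fun y => by simp [hτ]

lemma rankIn_lt_card {x : α} (hx : x ∈ s) : rankIn s f x < #s :=
  card_lt_card (filter_ssubset.2 ⟨x, hx, lt_irrefl _⟩)

lemma rankIn_lt_rankIn {x y : α} (hx : x ∈ s) (hxy : f x < f y) :
    rankIn s f x < rankIn s f y := by
  refine card_lt_card ((ssubset_iff_of_subset ?_).2 ⟨x, ?_, ?_⟩)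
  · intro z hz
    rw [mem_filter] at hz ⊢
    exact ⟨hz.1, hz.2.trans hxy⟩
  · exact mem_filter.2 ⟨hx, hxy⟩
  · simp

lemma injOn_rankIn (hf : Set.InjOn f s) : Set.InjOn (rankIn s f) s := by
  intro x hx y hy hxy
  rcases lt_trichotomy (f x) (f y) with h | h | h
  · exact absurd hxy (rankIn_lt_rankIn hx h).ne
  · exact hf hx hy h
  · exact absurd hxy (rankIn_lt_rankIn hy h).ne'

lemma image_rankIn [DecidableEq α] (hf : Set.InjOn f s) : s.image (rankIn s f) = range #s :=
  eq_of_subset_of_card_le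
    (fun _ hn => by
      obtain ⟨x, hx, rfl⟩ := mem_image.1 hn
      exact mem_range.2 (rankIn_lt_card hx))
    (by rw [card_range, card_image_of_injOn (injOn_rankIn hf)])

lemma card_filter_rankIn_eq [DecidableEq α] (hf : Set.InjOn f s) {r : ℕ} (hr : r < #s) :
    #{x ∈ s | rankIn s f x = r} = 1 := by
  obtain ⟨x, hx, rfl⟩ := mem_image.1 ((image_rankIn hf).symm ▸ mem_range.2 hr)
  refine card_eq_one.2 ⟨x, eq_singleton_iff_unique_mem.2 ⟨mem_filter.2 ⟨hx, rfl⟩, ?_⟩⟩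
  exact fun y hy => injOn_rankIn hf (mem_filter.1 hy).1 hx (mem_filter.1 hy).2

lemma swap_apply_mem_iff [DecidableEq α] {a b : α} (ha : a ∈ s) (hb : b ∈ s) (x : α) :
    Equiv.swap a b x ∈ s ↔ x ∈ s := by
  rw [Equiv.swap_apply_def]
  split_ifs with hxa hxb <;> simp_all

end Finset

namespace Equiv.Perm

variable {α : Type*} [Fintype α] [DecidableEq α] [LinearOrder α]

lemma card_rankIn_eq_of_mem {s : Finset α} {a b : α} (ha : a ∈ s) (hb : b ∈ s) (r : ℕ) :
    #{π : Perm α | rankIn s π.symm b = r} = #{π : Perm α | rankIn s π.symm a = r} := by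
  refine (card_equiv (Equiv.mulLeft (swap a b)) fun π => ?_).symm
  have hsymm : ⇑(swap a b * π).symm = π.symm ∘ swap a b := by
    ext x; simp [Perm.mul_def, symm_swap]
  simp [hsymm, rankIn_comp_perm (swap_apply_mem_iff ha hb)]

theorem card_mul_card_rankIn_eq {s : Finset α} {a : α} (ha : a ∈ s) {r : ℕ} (hr : r < #s) :
    #s * #{π : Perm α | rankIn s π.symm a = r} = (Fintype.card α).factorial := by
  calc #s * #{π : Perm α | rankIn s π.symm a = r}
      = ∑ b ∈ s, #{π : Perm α | rankIn s π.symm b = r} := by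
        rw [sum_congr rfl fun b hb => card_rankIn_eq_of_mem ha hb r, sum_const, smul_eq_mul]
    _ = ∑ π : Perm α, #{b ∈ s | rankIn s π.symm b = r} :=
        sum_card_bipartiteAbove_eq_sum_card_bipartiteBelow _
    _ = ∑ _π : Perm α, 1 :=
        sum_congr rfl fun π _ => card_filter_rankIn_eq π.symm.injective.injOn hr
    _ = (Fintype.card α).factorial := by simp [Fintype.card_perm]

end Equiv.Perm

open scoped Classical

/-- For a fixed vertex `i` of degree `nᵢ` in a graph on `k` vertices, and each
`r ∈ {0,…,nᵢ}`, the number of permutations `π` of the vertices under which exactly `r`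
neighbours of `i` precede `i` equals `k!/(nᵢ+1)`. -/
theorem dagar_perm_count {k : ℕ} (G : SimpleGraph (Fin k)) [DecidableRel G.Adj]
    (i : Fin k) (r : ℕ) (hr : r ≤ G.degree i) :
    (Finset.univ.filter (fun π : Equiv.Perm (Fin k) =>
        ((G.neighborFinset i).filter (fun j => π.symm j < π.symm i)).card = r)).card
      = (Nat.factorial k) / (G.degree i + 1) := by
  have hs : #(insert i (G.neighborFinset i)) = G.degree i + 1 := by
    rw [card_insert_of_notMem (G.notMem_neighborFinset_self i), G.card_neighborFinset_eq_degree]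
  have hrank : ∀ π : Equiv.Perm (Fin k), rankIn (insert i (G.neighborFinset i)) π.symm i
      = ((G.neighborFinset i).filter (fun j => π.symm j < π.symm i)).card := fun π => by
    simp [rankIn, filter_insert]
  have hcount := Equiv.Perm.card_mul_card_rankIn_eq (mem_insert_self i (G.neighborFinset i))
    (r := r) (by omega)
  simp only [hrank, hs, Fintype.card_fin] at hcount
  exact (Nat.div_eq_of_eq_mul_left (Nat.succ_pos _) (by rw [← hcount, mul_comm])).symm
end

section
/- Let G be a finite graph on k vertices, i a vertex with degree n_i, and j a fixed neighbor of i. Then for each r ∈ {1, …, n_i}, the number of permutations π of the vertices such that exactly r neighbors of i precede i and j is among them equals r·k!/(n_i(n_i+1)). -/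
/-!
Write `n = #N` for the neighbourhood `N` of `i`. Left multiplication by the transposition
`(i u)`, `u ∈ N`, exchanges the positions of `i` and `u`, so the number of elements of `N ∪ {i}`
before `i` has the same distribution as the number before `u`. Since in every ordering the elements
of `N ∪ {i}` occupy the ranks `0, …, n` once each, every rank `r ≤ n` is taken by `i` in exactly
`k!/(n+1)` orderings. Among those, a transposition `(u v)` of two neighbours preserves the event
and swaps "`u` precedes `i`" with "`v` precedes `i`", so each neighbour precedes `i` equally often;
counting the pairs (neighbour before `i`, ordering) in two ways gives `n · A = r · k!/(n+1)`
for the number `A` of orderings in question.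
-/

open Finset Equiv
open scoped Nat

lemma Equiv.swap_apply_mem_iff {α : Type*} [DecidableEq α] {S : Finset α} {a b : α}
    (ha : a ∈ S) (hb : b ∈ S) (w : α) : swap a b w ∈ S ↔ w ∈ S := by
  rw [swap_apply_def]; split_ifs <;> simp_all

namespace Equiv.Perm

variable {α : Type*} [LinearOrder α]

/-- `π` is read as the ordering of `α` in which `u` sits at position `π.symm u`. -/
def numBefore (π : Perm α) (S : Finset α) (u : α) : ℕ := #{w ∈ S | π.symm w < π.symm u}

lemma numBefore_swap_mul {S : Finset α} {a b : α} (ha : a ∈ S) (hb : b ∈ S) (π : Perm α)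
    (u : α) : (swap a b * π).numBefore S u = π.numBefore S (swap a b u) := by
  refine card_equiv (swap a b) fun w => ?_
  rw [mem_filter, mem_filter, swap_apply_mem_iff ha hb]
  simp [mul_def]

lemma numBefore_insert_self (π : Perm α) (S : Finset α) (u : α) :
    π.numBefore (insert u S) u = π.numBefore S u := by
  simp [numBefore, filter_insert]

lemma numBefore_lt_card {S : Finset α} {u : α} (hu : u ∈ S) (π : Perm α) :
    π.numBefore S u < #S :=
  card_lt_card (filter_ssubset.mpr ⟨u, hu, lt_irrefl _⟩)

lemma numBefore_lt_numBefore {S : Finset α} {u v : α} (hu : u ∈ S) (π : Perm α)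
    (h : π.symm u < π.symm v) : π.numBefore S u < π.numBefore S v := by
  refine card_lt_card ⟨fun w hw => ?_, fun hsub => ?_⟩
  · simp only [mem_filter] at hw ⊢
    exact ⟨hw.1, hw.2.trans h⟩
  · simpa using (mem_filter.mp (hsub (mem_filter.mpr ⟨hu, h⟩))).2

lemma injOn_numBefore (π : Perm α) (S : Finset α) : Set.InjOn (π.numBefore S) S := by
  intro u hu v hv huv
  by_contra hne
  rcases lt_or_gt_of_ne (π.symm.injective.ne hne) with h | h
  · exact (numBefore_lt_numBefore hu π h).ne huv
  · exact (numBefore_lt_numBefore hv π h).ne' huv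

lemma card_filter_numBefore_eq {S : Finset α} {r : ℕ} (hr : r < #S) (π : Perm α) :
    #{u ∈ S | π.numBefore S u = r} = 1 := by
  obtain ⟨u, hu, hur⟩ := surjOn_of_injOn_of_card_le (π.numBefore S)
    (fun u hu => mem_range.mpr (numBefore_lt_card hu π)) (π.injOn_numBefore S)
    (card_range _).le (mem_range.mpr hr)
  refine card_eq_one.mpr ⟨u, eq_singleton_iff_unique_mem.mpr ⟨mem_filter.mpr ⟨hu, hur⟩, ?_⟩⟩
  intro v hv
  rw [mem_filter] at hv
  exact π.injOn_numBefore S hv.1 hu (hv.2.trans hur.symm)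

variable [Fintype α]

lemma card_numBefore_eq_of_mem {S : Finset α} {u v : α} (hu : u ∈ S) (hv : v ∈ S) (r : ℕ) :
    #{π : Perm α | π.numBefore S u = r} = #{π : Perm α | π.numBefore S v = r} := by
  refine card_equiv (Equiv.mulLeft (swap u v)) fun π => ?_
  simp [numBefore_swap_mul hu hv]

lemma card_mul_card_numBefore_eq {S : Finset α} {u : α} (hu : u ∈ S) {r : ℕ} (hr : r < #S) :
    #S * #{π : Perm α | π.numBefore S u = r} = (Fintype.card α)! := by
  calc #S * #{π : Perm α | π.numBefore S u = r}
      = ∑ v ∈ S, #{π : Perm α | π.numBefore S v = r} := by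
        rw [sum_congr rfl fun v hv => card_numBefore_eq_of_mem hv hu r, sum_const, smul_eq_mul]
    _ = ∑ π : Perm α, #{v ∈ S | π.numBefore S v = r} :=
        sum_card_bipartiteAbove_eq_sum_card_bipartiteBelow _
    _ = (Fintype.card α)! := by
        simp [card_filter_numBefore_eq hr, Fintype.card_perm]

lemma card_mul_card_numBefore_eq_of_notMem {N : Finset α} {i : α} (hi : i ∉ N) {r : ℕ}
    (hr : r ≤ #N) : (#N + 1) * #{π : Perm α | π.numBefore N i = r} = (Fintype.card α)! := by
  have hcard : #(insert i N) = #N + 1 := card_insert_of_notMem hi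
  simpa [numBefore_insert_self, hcard] using
    card_mul_card_numBefore_eq (mem_insert_self i N) (hcard ▸ Nat.lt_succ_of_le hr)

lemma card_numBefore_eq_and_lt_eq {N : Finset α} {i u v : α} (hi : i ∉ N) (hu : u ∈ N)
    (hv : v ∈ N) (r : ℕ) :
    #{π : Perm α | π.numBefore N i = r ∧ π.symm u < π.symm i}
      = #{π : Perm α | π.numBefore N i = r ∧ π.symm v < π.symm i} := by
  have hswap : swap u v i = i :=
    swap_apply_of_ne_of_ne (ne_of_mem_of_not_mem hu hi).symm (ne_of_mem_of_not_mem hv hi).symm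
  refine card_equiv (Equiv.mulLeft (swap u v)) fun π => ?_
  simp only [mem_filter, mem_univ, true_and, coe_mulLeft, numBefore_swap_mul hu hv, hswap]
  simp [mul_def, hswap]

lemma sum_card_numBefore_eq_and_lt (N : Finset α) (i : α) (r : ℕ) :
    ∑ u ∈ N, #{π : Perm α | π.numBefore N i = r ∧ π.symm u < π.symm i}
      = r * #{π : Perm α | π.numBefore N i = r} := by
  calc ∑ u ∈ N, #{π : Perm α | π.numBefore N i = r ∧ π.symm u < π.symm i}
      = ∑ π ∈ {π : Perm α | π.numBefore N i = r}, π.numBefore N i := by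
        simp_rw [← filter_filter]
        exact sum_card_bipartiteAbove_eq_sum_card_bipartiteBelow _
    _ = r * #{π : Perm α | π.numBefore N i = r} := by
        rw [sum_congr rfl fun π hπ => (mem_filter.mp hπ).2, sum_const, smul_eq_mul, mul_comm]

lemma card_numBefore_eq_and_lt {N : Finset α} {i u : α} (hi : i ∉ N) (hu : u ∈ N) {r : ℕ}
    (hr : r ≤ #N) :
    #{π : Perm α | π.numBefore N i = r ∧ π.symm u < π.symm i}
      = r * (Fintype.card α)! / (#N * (#N + 1)) := by
  set A := #{π : Perm α | π.numBefore N i = r ∧ π.symm u < π.symm i}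
  set B := #{π : Perm α | π.numBefore N i = r}
  have hAB : #N * A = r * B := by
    rw [← sum_card_numBefore_eq_and_lt,
      sum_congr rfl fun v hv => card_numBefore_eq_and_lt_eq hi hv hu r, sum_const, smul_eq_mul]
  have hB := card_mul_card_numBefore_eq_of_notMem hi hr
  have hpos : 0 < #N * (#N + 1) := Nat.mul_pos (card_pos.mpr ⟨u, hu⟩) N.card.succ_pos
  refine (Nat.div_eq_of_eq_mul_left hpos ?_).symm
  calc r * (Fintype.card α)! = (#N + 1) * (r * B) := by rw [← hB]; ring
    _ = A * (#N * (#N + 1)) := by rw [← hAB]; ring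

end Equiv.Perm

theorem dagar_perm_count_one_general {k : ℕ} (G : SimpleGraph (Fin k)) [DecidableRel G.Adj]
    (i j : Fin k) (hj : G.Adj i j) (r : ℕ) (hr2 : r ≤ G.degree i) :
    (Finset.univ.filter (fun π : Equiv.Perm (Fin k) =>
        ((G.neighborFinset i).filter (fun u => π.symm u < π.symm i)).card = r ∧
          π.symm j < π.symm i)).card
      = r * Nat.factorial k / (G.degree i * (G.degree i + 1)) := by
  rw [← G.card_neighborFinset_eq_degree] at hr2 ⊢
  have h := Perm.card_numBefore_eq_and_lt (G.notMem_neighborFinset_self i)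
    ((G.mem_neighborFinset i j).mpr hj) hr2
  rwa [Fintype.card_fin] at h

/-- For a vertex `i` of degree `nᵢ ≥ 1` and a fixed neighbour `j` of `i`, and each
`r ∈ {1,…,nᵢ}`, the number of permutations `π` such that exactly `r` neighbours of `i`
precede `i`, with `j` among them, equals `r·k!/(nᵢ(nᵢ+1))`. -/
theorem dagar_perm_count_one {k : ℕ} (G : SimpleGraph (Fin k)) [DecidableRel G.Adj]
    (i j : Fin k) (hj : G.Adj i j) (r : ℕ) (hr1 : 1 ≤ r) (hr2 : r ≤ G.degree i) :
    (Finset.univ.filter (fun π : Equiv.Perm (Fin k) =>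
        ((G.neighborFinset i).filter (fun u => π.symm u < π.symm i)).card = r ∧
          π.symm j < π.symm i)).card
      = r * Nat.factorial k / (G.degree i * (G.degree i + 1)) :=
  dagar_perm_count_one_general G i j hj r hr2
end

section
/- Let G be a finite graph on k vertices, i a vertex of degree n_i ≥ 2, and j, l two distinct fixed neighbors of i. Then for each r ∈ {2, …, n_i}, the number of permutations π of the vertices such that exactly r neighbors of i precede i and both j and l are among them equals r(r-1)·k!/((n_i - 1)·n_i·(n_i + 1)). -/
/-!
Write `σ = π⁻¹` for the map sending a vertex to its position and put `S = {i} ∪ N(i)`, so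
that `|S| = n + 1`. The event only depends on the relative order of `S` under `σ`, i.e. on the
bijection `S ≃ Fin (n + 1)` sending `u` to the number of `v ∈ S` placed before it. This map
is equivariant for right multiplication by permutations of `S`, which act simply transitively
on relative orders, so each relative order is realised by `k! / (n + 1)!` permutations.
Likewise, permuting the ranks shows that the ranks of `(i, j, l)` are equidistributed over the
`(n + 1) n (n - 1)` injective triples, and exactly `r (r - 1)` of those put `i` at rank `r` and
`j, l` below it.
-/

open Finset Equiv

theorem card_filter_mem_mul_card_of_fibers_equiv {X Y : Type*} [Fintype X] [Fintype Y]
    [DecidableEq Y] (f : X → Y)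
    (hf : ∀ y y', ∃ e : X ≃ X, ∀ x, f (e x) = y' ↔ f x = y) (T : Finset Y) :
    #{x | f x ∈ T} * Fintype.card Y = #T * Fintype.card X := by
  have fiber (y : Y) : #{x | f x = y} * Fintype.card Y = Fintype.card X := by
    calc #{x | f x = y} * Fintype.card Y = ∑ y', #{x | f x = y'} := by
          rw [← card_univ, mul_comm, ← smul_eq_mul, ← sum_const]
          refine sum_congr rfl fun y' _ => ?_
          obtain ⟨e, he⟩ := hf y y'
          exact card_equiv e (by simp [he])
      _ = Fintype.card X := (card_eq_sum_card_fiberwise (by simp)).symm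
  have preimage : #{x | f x ∈ T} = ∑ t ∈ T, #{x | f x = t} := by
    rw [card_eq_sum_card_fiberwise (f := f) (t := T) (fun x hx => by simpa using hx)]
    refine sum_congr rfl fun t ht => ?_
    rw [filter_filter]
    exact congrArg card (filter_congr fun x _ => ⟨And.right, fun h => ⟨h ▸ ht, h⟩⟩)
  rw [preimage, sum_mul, sum_congr rfl fun t _ => fiber t, sum_const, smul_eq_mul]

namespace Finset

variable {α : Type*} [LinearOrder α] (S : Finset α) (σ : Perm α)

def relRank (u : α) : ℕ := #{v ∈ S | σ v < σ u}

variable {S σ}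

theorem relRank_le_relRank {u v : α} (h : σ u ≤ σ v) : S.relRank σ u ≤ S.relRank σ v :=
  card_le_card (monotone_filter_right S fun _ _ hw => hw.trans_le h)

theorem relRank_lt_relRank {u v : α} (hu : u ∈ S) (h : σ u < σ v) :
    S.relRank σ u < S.relRank σ v :=
  card_lt_card ((ssubset_iff_of_subset (monotone_filter_right S fun _ _ hw => hw.trans h)).2
    ⟨u, mem_filter.2 ⟨hu, h⟩, by simp⟩)

theorem relRank_lt_relRank_iff {u v : α} (hu : u ∈ S) :
    S.relRank σ u < S.relRank σ v ↔ σ u < σ v :=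
  ⟨fun h => lt_of_not_ge fun h' => (relRank_le_relRank h').not_gt h, relRank_lt_relRank hu⟩

theorem relRank_lt_card {u : α} (hu : u ∈ S) : S.relRank σ u < #S :=
  card_lt_card (filter_ssubset.2 ⟨u, hu, lt_irrefl _⟩)

theorem relRank_insert_self (N : Finset α) (u : α) :
    (insert u N).relRank σ u = #{v ∈ N | σ v < σ u} := by
  rw [relRank, filter_insert, if_neg (lt_irrefl _)]

variable (S σ)

noncomputable def relOrder : S ≃ Fin #S :=
  Equiv.ofBijective (fun u => ⟨S.relRank σ u, relRank_lt_card u.2⟩) <|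
    (Fintype.bijective_iff_injective_and_card _).2 ⟨fun u v huv => by
      have h : S.relRank σ u = S.relRank σ v := congrArg Fin.val huv
      refine Subtype.ext (σ.injective (le_antisymm ?_ ?_))
      · exact not_lt.1 fun h' => (relRank_lt_relRank v.2 h').ne h.symm
      · exact not_lt.1 fun h' => (relRank_lt_relRank u.2 h').ne h,
      by simp⟩

@[simp]
theorem relOrder_apply_val (u : S) : (S.relOrder σ u : ℕ) = S.relRank σ u := rfl

theorem relRank_mul_ofSubtype (p : Perm S) (u : S) :
    S.relRank (σ * Perm.ofSubtype p) u = S.relRank σ (p u) := by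
  rw [relRank, relRank, Perm.mul_apply, Perm.ofSubtype_apply_of_mem p u.2]
  exact card_equiv (Perm.ofSubtype p) fun v => by
    simp [Perm.ofSubtype_apply_mem_iff_mem]

theorem relOrder_mul_ofSubtype (p : Perm S) :
    S.relOrder (σ * Perm.ofSubtype p) = p.trans (S.relOrder σ) :=
  Equiv.ext fun u => Fin.ext (relRank_mul_ofSubtype S σ p u)

theorem card_filter_relOrder_mem_mul [Fintype α] (Q : Finset (S ≃ Fin #S)) :
    #{σ : Perm α | S.relOrder σ ∈ Q} * (#S).factorial = #Q * (Fintype.card α).factorial := by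
  have moves (q q' : S ≃ Fin #S) : ∃ e : Perm α ≃ Perm α,
      ∀ σ, S.relOrder (e σ) = q' ↔ S.relOrder σ = q := by
    refine ⟨Equiv.mulRight (Perm.ofSubtype (q'.trans q.symm)), fun σ => ?_⟩
    rw [Equiv.coe_mulRight, relOrder_mul_ofSubtype]
    constructor
    · intro h; ext u; simpa using congrArg (fun e => (e (q'.symm (q u)) : ℕ)) h
    · rintro rfl; ext; simp
  have h := card_filter_mem_mul_card_of_fibers_equiv S.relOrder moves Q
  rwa [Fintype.card_equiv (S.relOrder 1), Fintype.card_coe, Fintype.card_perm] at h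

end Finset

theorem card_filter_embedding_trans_mem_mul {κ α β : Type*} [Fintype κ] [Fintype α]
    [DecidableEq α] [Fintype β] [DecidableEq β] (ι : κ ↪ α) (T : Finset (κ ↪ β)) :
    #{q : α ≃ β | ι.trans q.toEmbedding ∈ T} * Fintype.card (κ ↪ β)
      = #T * Fintype.card (α ≃ β) := by
  refine card_filter_mem_mul_card_of_fibers_equiv _ (fun τ τ' => ?_) T
  obtain ⟨π, hπ⟩ := Perm.exists_extending_pair τ τ' τ.injective τ'.injective
  refine ⟨Equiv.equivCongr (Equiv.refl α) π, fun q => ?_⟩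
  simp [Function.Embedding.ext_iff, ← hπ]

theorem injective_vecCons_three {α : Type*} {a b c : α} (hab : a ≠ b) (hac : a ≠ c)
    (hbc : b ≠ c) : Function.Injective ![a, b, c] := by
  intro x y h
  fin_cases x <;> fin_cases y <;> simp_all [eq_comm]

theorem card_embedding_fin_three_filter_eq_lt_lt {m : ℕ} (b : Fin m) :
    #{τ : Fin 3 ↪ Fin m | τ 0 = b ∧ τ 1 < b ∧ τ 2 < b} = b * (b - 1) := by
  rw [Nat.mul_sub_one, ← Fin.card_Iio b, ← offDiag_card]
  refine card_bij (fun τ _ => (τ 1, τ 2)) (fun τ hτ => ?_) (fun τ hτ τ' hτ' h => ?_) ?_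
  · simp only [mem_filter, mem_univ, true_and] at hτ
    simp [hτ.2.1, hτ.2.2, τ.injective.ne (show (1 : Fin 3) ≠ 2 by decide)]
  · simp only [mem_filter, mem_univ, true_and, Prod.mk.injEq] at hτ hτ' h
    ext x
    fin_cases x <;> simp [hτ.1, hτ'.1, h.1, h.2]
  · rintro ⟨a, c⟩ hac
    simp only [mem_offDiag, mem_Iio] at hac
    refine ⟨⟨![b, a, c], injective_vecCons_three hac.1.ne' hac.2.1.ne' hac.2.2⟩, ?_, rfl⟩
    simp [hac.1, hac.2.1]

theorem card_relRank_eq_and_lt_and_lt_mul {α : Type*} [Fintype α] [LinearOrder α]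
    (S : Finset α) {i j l : α} (hi : i ∈ S) (hj : j ∈ S) (hl : l ∈ S) (hij : i ≠ j)
    (hil : i ≠ l) (hjl : j ≠ l) {r : ℕ} (hr : r < #S) :
    #{σ : Perm α | S.relRank σ i = r ∧ σ j < σ i ∧ σ l < σ i} * (#S).descFactorial 3
      = r * (r - 1) * (Fintype.card α).factorial := by
  let ι : Fin 3 ↪ S := ⟨![⟨i, hi⟩, ⟨j, hj⟩, ⟨l, hl⟩], injective_vecCons_three
    (Subtype.coe_ne_coe.1 hij) (Subtype.coe_ne_coe.1 hil) (Subtype.coe_ne_coe.1 hjl)⟩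
  let T : Finset (Fin 3 ↪ Fin #S) := {τ | τ 0 = ⟨r, hr⟩ ∧ τ 1 < ⟨r, hr⟩ ∧ τ 2 < ⟨r, hr⟩}
  let Q : Finset (S ≃ Fin #S) := {q | ι.trans q.toEmbedding ∈ T}
  have hpattern : #{σ : Perm α | S.relRank σ i = r ∧ σ j < σ i ∧ σ l < σ i}
      = #{σ | S.relOrder σ ∈ Q} := by
    refine congrArg card (filter_congr fun σ _ => ?_)
    simp only [Q, T, ι, mem_filter, mem_univ, true_and, Function.Embedding.trans_apply,
      Function.Embedding.coeFn_mk, Fin.ext_iff, Fin.lt_def, relOrder_apply_val]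
    change _ ↔ S.relRank σ i = r ∧ S.relRank σ j < r ∧ S.relRank σ l < r
    refine and_congr_right fun hri => ?_
    rw [← hri, relRank_lt_relRank_iff hj, relRank_lt_relRank_iff hl]
  have hσ := S.card_filter_relOrder_mem_mul Q
  have hq := card_filter_embedding_trans_mem_mul ι T
  rw [Fintype.card_embedding_eq, Fintype.card_fin, Fintype.card_fin,
    Fintype.card_equiv (S.relOrder 1), Fintype.card_coe,
    card_embedding_fin_three_filter_eq_lt_lt] at hq
  refine Nat.eq_of_mul_eq_mul_right (Nat.factorial_pos #S) ?_
  calc _ = #{σ | S.relOrder σ ∈ Q} * (#S).factorial * (#S).descFactorial 3 := by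
        rw [hpattern]; ring
    _ = _ := by rw [hσ, mul_right_comm, hq]; ring

theorem dagar_perm_count_two_general {k : ℕ} (G : SimpleGraph (Fin k)) [DecidableRel G.Adj]
    (i j l : Fin k) (hj : G.Adj i j) (hl : G.Adj i l) (hjl : j ≠ l)
    (r : ℕ) (hr1 : 2 ≤ r) (hr2 : r ≤ G.degree i) :
    (Finset.univ.filter (fun π : Equiv.Perm (Fin k) =>
        ((G.neighborFinset i).filter (fun u => π.symm u < π.symm i)).card = r ∧
          π.symm j < π.symm i ∧ π.symm l < π.symm i)).card
      = r * (r - 1) * Nat.factorial k / ((G.degree i - 1) * G.degree i * (G.degree i + 1)) := by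
  have hcard : #(insert i (G.neighborFinset i)) = G.degree i + 1 := by
    rw [card_insert_of_notMem (G.notMem_neighborFinset_self i), G.card_neighborFinset_eq_degree]
  have hcount := card_relRank_eq_and_lt_and_lt_mul (insert i (G.neighborFinset i))
    (mem_insert_self i _) (mem_insert_of_mem ((G.mem_neighborFinset i j).2 hj))
    (mem_insert_of_mem ((G.mem_neighborFinset i l).2 hl)) hj.ne hl.ne hjl (r := r) (by omega)
  rw [hcard, Nat.succ_descFactorial_succ, Nat.descFactorial_succ, Nat.descFactorial_one,
    Fintype.card_fin] at hcount
  simp only [relRank_insert_self] at hcount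
  rw [card_equiv (Equiv.inv (Perm (Fin k)))
    (t := {σ | #{u ∈ G.neighborFinset i | σ u < σ i} = r ∧ σ j < σ i ∧ σ l < σ i})
    (by simp [Perm.inv_def])]
  have hdeg : 2 ≤ G.degree i := hr1.trans hr2
  have hpos : 0 < (G.degree i - 1) * G.degree i * (G.degree i + 1) :=
    Nat.mul_pos (Nat.mul_pos (by omega) (by omega)) (by omega)
  refine (Nat.div_eq_of_eq_mul_left hpos ?_).symm
  rw [← hcount]
  ring

/-- For a vertex `i` of degree `nᵢ ≥ 2` and distinct fixed neighbours `j, l` of `i`, and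
each `r ∈ {2,…,nᵢ}`, the number of permutations `π` such that exactly `r` neighbours of `i`
precede `i`, with both `j` and `l` among them, equals `r(r-1)·k!/((nᵢ-1)nᵢ(nᵢ+1))`. -/
theorem dagar_perm_count_two {k : ℕ} (G : SimpleGraph (Fin k)) [DecidableRel G.Adj]
    (i j l : Fin k) (hj : G.Adj i j) (hl : G.Adj i l) (hjl : j ≠ l)
    (hdeg : 2 ≤ G.degree i) (r : ℕ) (hr1 : 2 ≤ r) (hr2 : r ≤ G.degree i) :
    (Finset.univ.filter (fun π : Equiv.Perm (Fin k) =>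
        ((G.neighborFinset i).filter (fun u => π.symm u < π.symm i)).card = r ∧
          π.symm j < π.symm i ∧ π.symm l < π.symm i)).card
      = r * (r - 1) * Nat.factorial k / ((G.degree i - 1) * G.degree i * (G.degree i + 1)) :=
  dagar_perm_count_two_general G i j l hj hl hjl r hr1 hr2
end

section
/- With the order-free DAGAR precision matrix Q = (1/k!) Σ_π Q_π as above, for distinct vertices i ≠ j: Q_{ij} = -(ρ/(1-ρ²))·1[i ~ j] + (1/(1-ρ²))·1[i ≈ j]·Σ_{l ∈ N(i)∩N(j)} (1/(2(n_l-1)) - (1/((n_l-1)n_l(n_l+1)))·Σ_{r=1}^{n_l} r/(1+(r-1)ρ²)), where the second sum ranges over the common neighbors l of i and j, and i ≈ j means N(i)∩N(j) ≠ ∅. -/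
open Matrix BigOperators Finset
open scoped Classical

lemma rank_injOn {α : Type*} [DecidableEq α] (T : Finset α) (o : α → ℕ)
    (ho : Set.InjOn o T) :
    Set.InjOn (fun m => (T.filter (fun u => o u < o m)).card) T := by
  intro x hx y hy hxy
  by_contra hne
  have hone : o x ≠ o y := fun h => hne (ho hx hy h)
  have key : ∀ a b : α, a ∈ T → o a < o b →
      (T.filter (fun u => o u < o a)).card < (T.filter (fun u => o u < o b)).card := by
    intro a b ha hab
    refine Finset.card_lt_card ⟨fun u hu => ?_, fun hsub => ?_⟩
    · simp only [Finset.mem_filter] at hu ⊢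
      exact ⟨hu.1, lt_trans hu.2 hab⟩
    · have ha' : a ∈ T.filter (fun u => o u < o b) := by
        simp only [Finset.mem_filter]; exact ⟨ha, hab⟩
      have := hsub ha'
      simp at this
  rcases lt_or_gt_of_ne hone with h | h
  · exact absurd hxy (Nat.ne_of_lt (key x y hx h))
  · exact absurd hxy.symm (Nat.ne_of_lt (key y x hy h))

lemma rank_image {α : Type*} [DecidableEq α] (T : Finset α) (o : α → ℕ)
    (ho : Set.InjOn o T) :
    T.image (fun m => (T.filter (fun u => o u < o m)).card) = Finset.range T.card := by
  have hlt : ∀ m ∈ T, (T.filter (fun u => o u < o m)).card < T.card := by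
    intro m hm
    refine Finset.card_lt_card ⟨Finset.filter_subset _ _, fun hsub => ?_⟩
    have := hsub hm
    simp at this
  apply Finset.eq_of_subset_of_card_le
  · intro r hr
    rcases Finset.mem_image.1 hr with ⟨m, hm, rfl⟩
    exact Finset.mem_range.2 (hlt m hm)
  · rw [Finset.card_image_of_injOn (rank_injOn T o ho), Finset.card_range]

lemma sum_rank {α : Type*} [DecidableEq α] (T : Finset α) (o : α → ℕ)
    (ho : Set.InjOn o T) (g : ℕ → ℝ) :
    ∑ m ∈ T, g ((T.filter (fun u => o u < o m)).card)
      = ∑ r ∈ Finset.range T.card, g r := by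
  rw [← rank_image T o ho, Finset.sum_image (fun x hx y hy h => rank_injOn T o ho hx hy h)]

noncomputable def pord {k : ℕ} (σ : Equiv.Perm (Fin k)) : Fin k → ℕ :=
  fun v => ((Fintype.equivFin (Fin k)) (σ v) : ℕ)

lemma pord_injective {k : ℕ} (σ : Equiv.Perm (Fin k)) : Function.Injective (pord σ) :=
  fun _ _ h => σ.injective ((Fintype.equivFin (Fin k)).injective (Fin.val_injective h))

lemma sum_pord_comp {k : ℕ} (π : Equiv.Perm (Fin k)) (F : (Fin k → ℕ) → ℝ) :
    ∑ σ : Equiv.Perm (Fin k), F (fun v => pord σ (π v))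
      = ∑ σ : Equiv.Perm (Fin k), F (pord σ) := by
  have h := Equiv.sum_comp (Equiv.mulRight π) (fun σ : Equiv.Perm (Fin k) => F (pord σ))
  rw [← h]
  refine Finset.sum_congr rfl (fun σ _ => ?_)
  congr 1

lemma swap_mem {α : Type*} [DecidableEq α] {N : Finset α} {x y : α}
    (hx : x ∈ N) (hy : y ∈ N) (u : α) : Equiv.swap x y u ∈ N ↔ u ∈ N := by
  rcases eq_or_ne u x with rfl | hux
  · simp [Equiv.swap_apply_left, hx, hy]
  rcases eq_or_ne u y with rfl | huy
  · simp [Equiv.swap_apply_right, hx, hy]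
  · rw [Equiv.swap_apply_of_ne_of_ne hux huy]

lemma filter_card_comp {α : Type*} [DecidableEq α] (N N' : Finset α) (π : Equiv.Perm α)
    (hπ : ∀ u, π u ∈ N' ↔ u ∈ N) (P : α → Prop) [DecidablePred P] :
    (N.filter (fun u => P (π u))).card = (N'.filter P).card := by
  have himg : N.filter (fun u => P (π u)) = (N'.filter P).image π.symm := by
    ext u
    simp only [Finset.mem_filter, Finset.mem_image]
    constructor
    · intro h
      exact ⟨π u, ⟨(hπ u).2 h.1, h.2⟩, π.symm_apply_apply u⟩
    · rintro ⟨v, hv, rfl⟩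
      constructor
      · exact (hπ _).1 (by rw [Equiv.apply_symm_apply]; exact hv.1)
      · rw [Equiv.apply_symm_apply]; exact hv.2
  rw [himg, Finset.card_image_of_injective _ π.symm.injective]

lemma lemD {k : ℕ} (N : Finset (Fin k)) (l : Fin k) (hl : l ∉ N) (g : ℕ → ℝ) :
    ((N.card : ℝ) + 1) * ∑ σ : Equiv.Perm (Fin k),
        g ((N.filter (fun u => pord σ u < pord σ l)).card)
      = (Nat.factorial k : ℝ) * ∑ r ∈ Finset.range (N.card + 1), g r := by
  set T := insert l N with hT
  have hlT : l ∈ T := Finset.mem_insert_self l N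
  have hTcard : T.card = N.card + 1 := Finset.card_insert_of_notMem hl
  have hNT : T.erase l = N := by rw [hT, Finset.erase_insert hl]
  have hstep : ∀ m ∈ T, ∑ σ : Equiv.Perm (Fin k),
      g (((T.erase m).filter (fun u => pord σ u < pord σ m)).card)
      = ∑ σ : Equiv.Perm (Fin k), g ((N.filter (fun u => pord σ u < pord σ l)).card) := by
    intro m hm
    set π := Equiv.swap l m with hπdef
    have hπm : π m = l := Equiv.swap_apply_right l m
    have hπ : ∀ u, π u ∈ T.erase l ↔ u ∈ T.erase m := by
      intro u
      simp only [Finset.mem_erase]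
      constructor
      · rintro ⟨h1, h2⟩
        refine ⟨fun h => h1 ?_, (swap_mem hlT hm u).1 h2⟩
        rw [h, hπm]
      · rintro ⟨h1, h2⟩
        refine ⟨fun h => h1 (π.injective ?_), (swap_mem hlT hm u).2 h2⟩
        rw [h, hπm]
    have h1 := sum_pord_comp π
      (fun o => g (((T.erase m).filter (fun u => o u < o m)).card))
    rw [← hNT, ← h1]
    refine Finset.sum_congr rfl (fun σ _ => ?_)
    simp only [hπm]
    rw [filter_card_comp (T.erase m) (T.erase l) π hπ (fun u => pord σ u < pord σ l)]
  have hconst : ∑ m ∈ T, (∑ σ : Equiv.Perm (Fin k),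
      g (((T.erase m).filter (fun u => pord σ u < pord σ m)).card))
      = (T.card : ℝ) * ∑ σ : Equiv.Perm (Fin k),
          g ((N.filter (fun u => pord σ u < pord σ l)).card) := by
    rw [Finset.sum_congr rfl hstep, Finset.sum_const, nsmul_eq_mul]
  have hinner : ∀ σ : Equiv.Perm (Fin k),
      ∑ m ∈ T, g (((T.erase m).filter (fun u => pord σ u < pord σ m)).card)
      = ∑ r ∈ Finset.range T.card, g r := by
    intro σ
    have heq : ∀ m ∈ T, ((T.erase m).filter (fun u => pord σ u < pord σ m)).card
        = (T.filter (fun u => pord σ u < pord σ m)).card := by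
      intro m _
      rw [Finset.filter_erase, Finset.erase_eq_of_notMem]
      simp
    rw [Finset.sum_congr rfl (fun m hm => congrArg g (heq m hm))]
    exact sum_rank T (pord σ) ((pord_injective σ).injOn) g
  have hswap : ∑ m ∈ T, (∑ σ : Equiv.Perm (Fin k),
      g (((T.erase m).filter (fun u => pord σ u < pord σ m)).card))
      = ∑ σ : Equiv.Perm (Fin k), ∑ m ∈ T,
          g (((T.erase m).filter (fun u => pord σ u < pord σ m)).card) :=
    Finset.sum_comm
  have hc1 : ((N.card : ℝ) + 1) = (T.card : ℝ) := by rw [hTcard]; push_cast; ring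
  have hr : Finset.range (N.card + 1) = Finset.range T.card := by rw [hTcard]
  rw [hc1, hr, ← hconst, hswap, Finset.sum_congr rfl (fun σ _ => hinner σ),
    Finset.sum_const, nsmul_eq_mul, Finset.card_univ]
  norm_num [Fintype.card_perm]

lemma lemC {k : ℕ} (N : Finset (Fin k)) (l : Fin k) (hl : l ∉ N)
    (i j : Fin k) (hi : i ∈ N) (hj : j ∈ N) (hij : i ≠ j) (f : ℕ → ℝ) :
    ((N.card : ℝ) * ((N.card : ℝ) - 1)) * ∑ σ : Equiv.Perm (Fin k),
        (if pord σ i < pord σ l ∧ pord σ j < pord σ l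
          then f ((N.filter (fun u => pord σ u < pord σ l)).card) else 0)
      = ∑ σ : Equiv.Perm (Fin k),
          (f ((N.filter (fun u => pord σ u < pord σ l)).card)
            * ((N.filter (fun u => pord σ u < pord σ l)).card : ℝ)
            * (((N.filter (fun u => pord σ u < pord σ l)).card : ℝ) - 1)) := by
  have key : ∀ a b : Fin k, a ∈ N → b ∈ N → a ≠ b →
      (∑ σ : Equiv.Perm (Fin k),
        (if pord σ a < pord σ l ∧ pord σ b < pord σ l
          then f ((N.filter (fun u => pord σ u < pord σ l)).card) else 0))
      = ∑ σ : Equiv.Perm (Fin k),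
        (if pord σ i < pord σ l ∧ pord σ j < pord σ l
          then f ((N.filter (fun u => pord σ u < pord σ l)).card) else 0) := by
    intro a b ha hb hab
    set c : Fin k := Equiv.swap i a j with hc
    have hcN : c ∈ N := by
      rcases eq_or_ne j a with rfl | hja
      · rw [hc, Equiv.swap_apply_right]; exact hi
      · rw [hc, Equiv.swap_apply_of_ne_of_ne (Ne.symm hij) hja]; exact hj
    have hca : c ≠ a := by
      intro h
      have h2 : Equiv.swap i a c = Equiv.swap i a a := congrArg _ h
      rw [hc, Equiv.swap_apply_self, Equiv.swap_apply_right] at h2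
      exact hij h2.symm
    set π : Equiv.Perm (Fin k) := Equiv.swap c b * Equiv.swap i a with hπdef
    have hπi : π i = a := by
      rw [hπdef, Equiv.Perm.mul_apply, Equiv.swap_apply_left,
        Equiv.swap_apply_of_ne_of_ne (Ne.symm hca) hab]
    have hπj : π j = b := by
      rw [hπdef, Equiv.Perm.mul_apply, ← hc, Equiv.swap_apply_left]
    have hπl : π l = l := by
      have h1 : Equiv.swap i a l = l :=
        Equiv.swap_apply_of_ne_of_ne (fun h => hl (by rw [h]; exact hi))
          (fun h => hl (by rw [h]; exact ha))
      rw [hπdef, Equiv.Perm.mul_apply, h1]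
      exact Equiv.swap_apply_of_ne_of_ne (fun h => hl (by rw [h]; exact hcN))
        (fun h => hl (by rw [h]; exact hb))
    have hπN : ∀ u, π u ∈ N ↔ u ∈ N := by
      intro u
      rw [hπdef, Equiv.Perm.mul_apply, swap_mem hcN hb, swap_mem hi ha]
    rw [← sum_pord_comp π (fun o => if o i < o l ∧ o j < o l
      then f ((N.filter (fun u => o u < o l)).card) else 0)]
    refine Finset.sum_congr rfl (fun σ _ => ?_)
    simp only [hπi, hπj, hπl]
    rw [filter_card_comp N N π hπN (fun u => pord σ u < pord σ l)]
  have hsum1 : ∑ p ∈ N.offDiag, (∑ σ : Equiv.Perm (Fin k),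
      (if pord σ p.1 < pord σ l ∧ pord σ p.2 < pord σ l
        then f ((N.filter (fun u => pord σ u < pord σ l)).card) else 0))
      = (N.offDiag.card : ℝ) * ∑ σ : Equiv.Perm (Fin k),
        (if pord σ i < pord σ l ∧ pord σ j < pord σ l
          then f ((N.filter (fun u => pord σ u < pord σ l)).card) else 0) := by
    rw [Finset.sum_congr rfl (fun p hp => key p.1 p.2 (Finset.mem_offDiag.1 hp).1
      (Finset.mem_offDiag.1 hp).2.1 (Finset.mem_offDiag.1 hp).2.2),
      Finset.sum_const, nsmul_eq_mul]
  have hinner : ∀ σ : Equiv.Perm (Fin k),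
      ∑ p ∈ N.offDiag, (if pord σ p.1 < pord σ l ∧ pord σ p.2 < pord σ l
        then f ((N.filter (fun u => pord σ u < pord σ l)).card) else 0)
      = f ((N.filter (fun u => pord σ u < pord σ l)).card)
          * ((N.filter (fun u => pord σ u < pord σ l)).card : ℝ)
          * (((N.filter (fun u => pord σ u < pord σ l)).card : ℝ) - 1) := by
    intro σ
    set S := N.filter (fun u => pord σ u < pord σ l) with hS
    have hfil : N.offDiag.filter
        (fun p => pord σ p.1 < pord σ l ∧ pord σ p.2 < pord σ l) = S.offDiag := by
      ext p
      simp only [Finset.mem_filter, Finset.mem_offDiag, hS]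
      tauto
    rw [Finset.sum_ite, Finset.sum_const_zero, add_zero, Finset.sum_const, hfil,
      nsmul_eq_mul, Finset.offDiag_card]
    have hle : S.card ≤ S.card * S.card := by
      cases h : S.card with
      | zero => simp
      | succ m => exact Nat.le_mul_of_pos_left _ (Nat.succ_pos m)
    push_cast [Nat.cast_sub hle]
    ring
  rw [← Finset.sum_congr rfl (fun σ _ => hinner σ), ← Finset.sum_comm, hsum1,
    Finset.offDiag_card]
  have hle : N.card ≤ N.card * N.card := Nat.le_mul_of_pos_left _ (by
    exact Finset.card_pos.2 ⟨i, hi⟩)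
  push_cast [Nat.cast_sub hle]
  ring
lemma card_pos_of_mem {V : Type*} [Fintype V] [DecidableEq V] (G : SimpleGraph V)
    (ord : V → ℕ) {u v : V} (h : u ∈ dagarN G ord v) (ρ : ℝ) :
    (1 + (((dagarN G ord v).card : ℝ) - 1) * ρ ^ 2) ≠ 0 := by
  have h1 : 1 ≤ (dagarN G ord v).card := Finset.card_pos.2 ⟨u, h⟩
  have : (1:ℝ) ≤ ((dagarN G ord v).card : ℝ) := by exact_mod_cast h1
  nlinarith [sq_nonneg ρ]

lemma dagarQ_offdiag' {V : Type*} [Fintype V] [DecidableEq V] (G : SimpleGraph V)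
    (ord : V → ℕ) (hord : Function.Injective ord) (ρ : ℝ)
    (i j : V) (hij : i ≠ j) :
    dagarQ G ord ρ i j
      = -(ρ / (1 - ρ ^ 2)) * (if G.Adj i j then 1 else 0)
        + ∑ l, (if i ∈ dagarN G ord l ∧ j ∈ dagarN G ord l
            then ρ^2 / ((1 - ρ^2) * (1 + (((dagarN G ord l).card : ℝ) - 1) * ρ ^ 2)) else 0) := by
  have hQ : dagarQ G ord ρ i j = ∑ v, ((if v = i then (1:ℝ) else 0) - dagarB G ord ρ v i)
      * ((1 + (((dagarN G ord v).card : ℝ) - 1) * ρ ^ 2) / (1 - ρ ^ 2)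
        * ((if v = j then (1:ℝ) else 0) - dagarB G ord ρ v j)) := by
    rw [dagarQ, Matrix.mul_assoc, Matrix.mul_apply]
    apply Finset.sum_congr rfl
    intro v _
    simp [dagarF, Matrix.diagonal_mul, Matrix.transpose_apply, Matrix.sub_apply,
      Matrix.one_apply, eq_comm]
  rw [hQ]
  have hsplit : ∀ v, ((if v = i then (1:ℝ) else 0) - dagarB G ord ρ v i)
      * ((1 + (((dagarN G ord v).card : ℝ) - 1) * ρ ^ 2) / (1 - ρ ^ 2)
        * ((if v = j then (1:ℝ) else 0) - dagarB G ord ρ v j))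
      = -((if v = i then (1:ℝ) else 0) * ((1 + (((dagarN G ord v).card : ℝ) - 1) * ρ ^ 2) / (1 - ρ ^ 2) * dagarB G ord ρ v j))
        - ((if v = j then (1:ℝ) else 0) * ((1 + (((dagarN G ord v).card : ℝ) - 1) * ρ ^ 2) / (1 - ρ ^ 2) * dagarB G ord ρ v i))
        + dagarB G ord ρ v i * ((1 + (((dagarN G ord v).card : ℝ) - 1) * ρ ^ 2) / (1 - ρ ^ 2)) * dagarB G ord ρ v j := by
    intro v
    have h0 : (if v = i then (1:ℝ) else 0) * (if v = j then (1:ℝ) else 0) = 0 := by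
      split_ifs with h h' <;> simp_all
    linear_combination ((1 + (((dagarN G ord v).card : ℝ) - 1) * ρ ^ 2) / (1 - ρ ^ 2)) * h0
  simp only [hsplit]
  rw [Finset.sum_add_distrib, Finset.sum_sub_distrib, Finset.sum_neg_distrib]
  have eB : ∀ v u : V, (1 + (((dagarN G ord v).card : ℝ) - 1) * ρ ^ 2) / (1 - ρ ^ 2)
      * dagarB G ord ρ v u
      = if u ∈ dagarN G ord v then ρ / (1 - ρ^2) else 0 := by
    intro v u
    by_cases h : u ∈ dagarN G ord v
    · have hc := card_pos_of_mem G ord h ρ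
      simp only [dagarB, Matrix.of_apply, h, if_true]
      field_simp
    · simp [dagarB, h]
  have e1 : ∑ v, (if v = i then (1:ℝ) else 0)
      * ((1 + (((dagarN G ord v).card : ℝ) - 1) * ρ ^ 2) / (1 - ρ ^ 2) * dagarB G ord ρ v j)
      = if j ∈ dagarN G ord i then ρ / (1 - ρ^2) else 0 := by
    simp only [ite_mul, one_mul, zero_mul, Finset.sum_ite_eq', Finset.mem_univ, if_true]
    exact eB i j
  have e2 : ∑ v, (if v = j then (1:ℝ) else 0)
      * ((1 + (((dagarN G ord v).card : ℝ) - 1) * ρ ^ 2) / (1 - ρ ^ 2) * dagarB G ord ρ v i)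
      = if i ∈ dagarN G ord j then ρ / (1 - ρ^2) else 0 := by
    simp only [ite_mul, one_mul, zero_mul, Finset.sum_ite_eq', Finset.mem_univ, if_true]
    exact eB j i
  have e3 : ∀ v, dagarB G ord ρ v i * ((1 + (((dagarN G ord v).card : ℝ) - 1) * ρ ^ 2) / (1 - ρ ^ 2)) * dagarB G ord ρ v j
      = if i ∈ dagarN G ord v ∧ j ∈ dagarN G ord v
          then ρ^2 / ((1 - ρ^2) * (1 + (((dagarN G ord v).card : ℝ) - 1) * ρ ^ 2)) else 0 := by
    intro v
    by_cases hi' : i ∈ dagarN G ord v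
    · by_cases hj' : j ∈ dagarN G ord v
      · have hc := card_pos_of_mem G ord hi' ρ
        simp only [dagarB, Matrix.of_apply, hi', hj', if_true, and_self]
        field_simp
      · simp [dagarB, hj']
    · simp [dagarB, hi']
  have hadj : (if j ∈ dagarN G ord i then (1:ℝ) else 0) + (if i ∈ dagarN G ord j then 1 else 0)
      = (if G.Adj i j then 1 else 0) := by
    by_cases hA : G.Adj i j
    · have hne : ord i ≠ ord j := fun h => hij (hord h)
      rcases lt_or_gt_of_ne hne with h | h
      · simp [dagarN, hA, hA.symm, h, not_lt.2 h.le]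
      · simp [dagarN, hA, hA.symm, h, not_lt.2 h.le]
    · have hA' : ¬ G.Adj j i := fun h => hA h.symm
      simp [dagarN, hA, hA']
  rw [e1, e2]
  rw [Finset.sum_congr rfl (fun v _ => e3 v)]
  have : -(if j ∈ dagarN G ord i then ρ / (1 - ρ^2) else (0:ℝ))
      - (if i ∈ dagarN G ord j then ρ / (1 - ρ^2) else 0)
      = -(ρ / (1 - ρ ^ 2)) * (if G.Adj i j then 1 else 0) := by
    rw [← hadj]
    split_ifs <;> ring
  rw [this]


lemma dagarN_eq {V : Type*} [Fintype V] [DecidableEq V] (G : SimpleGraph V)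
    [DecidableRel G.Adj] (ord : V → ℕ) (l : V) :
    dagarN G ord l = (G.neighborFinset l).filter (fun u => ord u < ord l) := by
  ext u
  simp [dagarN, SimpleGraph.mem_neighborFinset]

/-- Off-diagonal entries of the order-free DAGAR precision matrix: for `i ≠ j`,
`Q_{ij} = -(ρ/(1-ρ²))1[i∼j] + (ρ²/(1-ρ²))1[i≈j] ∑_{l∈N(i)∩N(j)}
  (1/((n_l-1)n_l(n_l+1))) ∑_{r=1}^{n_l} r(r-1)/(1+(r-1)ρ²)`,
where `i ≈ j` means `i` and `j` have a common neighbour. -/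
theorem dagarOF_offdiag {k : ℕ} (G : SimpleGraph (Fin k)) [DecidableRel G.Adj]
    (ρ : ℝ) (h0 : 0 ≤ ρ) (h1 : ρ < 1) (i j : Fin k) (hij : i ≠ j) :
    dagarOF G ρ i j
      = -(ρ / (1 - ρ ^ 2)) * (if G.Adj i j then 1 else 0)
        + ρ ^ 2 / (1 - ρ ^ 2) *
          (if (G.neighborFinset i ∩ G.neighborFinset j).Nonempty then 1 else 0) *
          ∑ l ∈ G.neighborFinset i ∩ G.neighborFinset j,
            (1 / (((G.degree l : ℝ) - 1) * (G.degree l : ℝ) * ((G.degree l : ℝ) + 1))) *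
              ∑ r ∈ Finset.Icc 1 (G.degree l),
                (r : ℝ) * ((r : ℝ) - 1) / (1 + ((r : ℝ) - 1) * ρ ^ 2) := by
  have hρpos : (0:ℝ) < 1 - ρ ^ 2 := by nlinarith
  have hρ2 : (1:ℝ) - ρ ^ 2 ≠ 0 := ne_of_gt hρpos
  have hfact : (Nat.factorial k : ℝ) ≠ 0 := Nat.cast_ne_zero.2 (Nat.factorial_ne_zero k)
  have hOF : dagarOF G ρ i j = (Nat.factorial k : ℝ)⁻¹ *
      ∑ σ : Equiv.Perm (Fin k), dagarQ G (pord σ) ρ i j := by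
    rw [dagarOF, Matrix.smul_apply, Matrix.sum_apply, smul_eq_mul]
    congr 1
    rw [Fintype.card_fin]
  have hentry : ∀ σ : Equiv.Perm (Fin k),
      dagarQ G (pord σ) ρ i j
        = -(ρ / (1 - ρ ^ 2)) * (if G.Adj i j then 1 else 0)
          + ∑ l, (if i ∈ dagarN G (pord σ) l ∧ j ∈ dagarN G (pord σ) l
              then ρ^2 / ((1 - ρ^2) * (1 + (((dagarN G (pord σ) l).card : ℝ) - 1) * ρ ^ 2))
              else 0) := by
    intro σ
    rw [dagarQ_offdiag' G (pord σ) (pord_injective σ) ρ i j hij]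
    by_cases hA : G.Adj i j <;> simp [hA]
  rw [hOF, Finset.sum_congr rfl (fun σ _ => hentry σ), Finset.sum_add_distrib, mul_add]
  congr 1
  · rw [Finset.sum_const, Finset.card_univ, Fintype.card_perm, Fintype.card_fin,
      nsmul_eq_mul, ← mul_assoc, inv_mul_cancel₀ hfact, one_mul]
  have hmain : ∀ l : Fin k, (Nat.factorial k : ℝ)⁻¹ * ∑ σ : Equiv.Perm (Fin k),
      (if i ∈ dagarN G (pord σ) l ∧ j ∈ dagarN G (pord σ) l
        then ρ^2 / ((1 - ρ^2) * (1 + (((dagarN G (pord σ) l).card : ℝ) - 1) * ρ ^ 2)) else 0)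
      = if l ∈ G.neighborFinset i ∩ G.neighborFinset j then
          ρ ^ 2 / (1 - ρ ^ 2) *
            ((1 / (((G.degree l : ℝ) - 1) * (G.degree l : ℝ) * ((G.degree l : ℝ) + 1))) *
              ∑ r ∈ Finset.Icc 1 (G.degree l),
                (r : ℝ) * ((r : ℝ) - 1) / (1 + ((r : ℝ) - 1) * ρ ^ 2))
        else 0 := by
    intro l
    by_cases hAl : G.Adj l i ∧ G.Adj l j
    · have hi' : i ∈ G.neighborFinset l := (SimpleGraph.mem_neighborFinset G l i).2 hAl.1
      have hj' : j ∈ G.neighborFinset l := (SimpleGraph.mem_neighborFinset G l j).2 hAl.2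
      have hlN : l ∉ G.neighborFinset l :=
        fun h => G.irrefl ((SimpleGraph.mem_neighborFinset G l l).1 h)
      have hbody : ∀ σ : Equiv.Perm (Fin k),
          (if i ∈ dagarN G (pord σ) l ∧ j ∈ dagarN G (pord σ) l
            then ρ^2 / ((1 - ρ^2) * (1 + (((dagarN G (pord σ) l).card : ℝ) - 1) * ρ ^ 2))
            else 0)
          = (if pord σ i < pord σ l ∧ pord σ j < pord σ l
              then ρ^2 / ((1 - ρ^2) * (1 +
                ((((G.neighborFinset l).filter (fun u => pord σ u < pord σ l)).card : ℝ) - 1)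
                  * ρ ^ 2))
              else 0) := by
        intro σ
        rw [dagarN_eq]
        simp only [Finset.mem_filter, SimpleGraph.mem_neighborFinset, hAl.1, hAl.2, true_and]
      rw [Finset.sum_congr rfl (fun σ _ => hbody σ)]
      have hd2 : 1 < (G.neighborFinset l).card := Finset.one_lt_card.2 ⟨i, hi', j, hj', hij⟩
      have hdeg : G.degree l = (G.neighborFinset l).card := rfl
      have hdR : (2:ℝ) ≤ ((G.neighborFinset l).card : ℝ) := by exact_mod_cast hd2
      have E1 := lemC (G.neighborFinset l) l hlN i j hi' hj' hij
        (fun r => ρ^2 / ((1 - ρ^2) * (1 + ((r:ℝ) - 1) * ρ ^ 2)))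
      have E2 := lemD (G.neighborFinset l) l hlN
        (fun r => ρ^2 / ((1 - ρ^2) * (1 + ((r:ℝ) - 1) * ρ ^ 2)) * (r:ℝ) * ((r:ℝ) - 1))
      have hmem : l ∈ G.neighborFinset i ∩ G.neighborFinset j :=
        Finset.mem_inter.2 ⟨(SimpleGraph.mem_neighborFinset G i l).2 hAl.1.symm,
          (SimpleGraph.mem_neighborFinset G j l).2 hAl.2.symm⟩
      rw [if_pos hmem]
      have hSg : ∑ r ∈ Finset.range ((G.neighborFinset l).card + 1),
          (ρ^2 / ((1 - ρ^2) * (1 + ((r:ℝ) - 1) * ρ ^ 2)) * (r:ℝ) * ((r:ℝ) - 1))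
          = ρ^2/(1-ρ^2) * ∑ r ∈ Finset.Icc 1 ((G.neighborFinset l).card),
              (r : ℝ) * ((r : ℝ) - 1) / (1 + ((r : ℝ) - 1) * ρ ^ 2) := by
        have hins : Finset.range ((G.neighborFinset l).card + 1)
            = insert 0 (Finset.Icc 1 ((G.neighborFinset l).card)) := by
          ext r; simp only [Finset.mem_range, Finset.mem_insert, Finset.mem_Icc]; omega
        rw [hins, Finset.sum_insert (by simp), Finset.mul_sum]
        have h00 : (ρ^2 / ((1 - ρ^2) * (1 + (((0:ℕ):ℝ) - 1) * ρ ^ 2)) * ((0:ℕ):ℝ)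
            * (((0:ℕ):ℝ) - 1)) = 0 := by norm_num
        rw [h00, zero_add]
        refine Finset.sum_congr rfl (fun r hr => ?_)
        have hr1 : 1 ≤ r := (Finset.mem_Icc.1 hr).1
        have hrR : (1:ℝ) ≤ (r:ℝ) := by exact_mod_cast hr1
        have hden : (1 + ((r:ℝ)-1) * ρ^2) ≠ 0 := by nlinarith
        field_simp
      rw [hSg] at E2
      have hX : (((G.neighborFinset l).card : ℝ)+1) * ((((G.neighborFinset l).card : ℝ) * (((G.neighborFinset l).card : ℝ) - 1)) * (∑ σ : Equiv.Perm (Fin k),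
          (if pord σ i < pord σ l ∧ pord σ j < pord σ l
            then ρ^2 / ((1 - ρ^2) * (1 +
              ((((G.neighborFinset l).filter (fun u => pord σ u < pord σ l)).card : ℝ) - 1)
                * ρ ^ 2))
            else 0)))
          = (Nat.factorial k : ℝ) * (ρ^2/(1-ρ^2) *
              ∑ r ∈ Finset.Icc 1 ((G.neighborFinset l).card),
                (r : ℝ) * ((r : ℝ) - 1) / (1 + ((r : ℝ) - 1) * ρ ^ 2)) := by
        rw [E1]; exact E2
      simp only [SimpleGraph.card_neighborFinset_eq_degree] at hX
      have hdRd : (2:ℝ) ≤ ((G.degree l : ℝ)) := by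
        rw [hdeg]; exact hdR
      have p1 : (0:ℝ) < (G.degree l : ℝ) - 1 := by linarith
      have p2 : (0:ℝ) < (G.degree l : ℝ) := by linarith
      have p3 : (0:ℝ) < (G.degree l : ℝ) + 1 := by linarith
      have hdne : ((G.degree l : ℝ) - 1) * (G.degree l : ℝ) * ((G.degree l : ℝ) + 1) ≠ 0 :=
        ne_of_gt (mul_pos (mul_pos p1 p2) p3)
      field_simp at hX
      field_simp
      linear_combination hX
    · have hzero : ∀ σ : Equiv.Perm (Fin k),
          (if i ∈ dagarN G (pord σ) l ∧ j ∈ dagarN G (pord σ) l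
            then ρ^2 / ((1 - ρ^2) * (1 + (((dagarN G (pord σ) l).card : ℝ) - 1) * ρ ^ 2))
            else 0) = 0 := by
        intro σ
        rw [if_neg]
        intro hcon
        have hc1 := hcon.1
        have hc2 := hcon.2
        simp only [dagarN, Finset.mem_filter, Finset.mem_univ, true_and] at hc1 hc2
        exact hAl ⟨hc1.1, hc2.1⟩
      have hnot : l ∉ G.neighborFinset i ∩ G.neighborFinset j := by
        intro h
        rcases Finset.mem_inter.1 h with ⟨h1, h2⟩
        exact hAl ⟨((SimpleGraph.mem_neighborFinset G i l).1 h1).symm,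
          ((SimpleGraph.mem_neighborFinset G j l).1 h2).symm⟩
      rw [Finset.sum_congr rfl (fun σ _ => hzero σ), Finset.sum_const_zero, mul_zero,
        if_neg hnot]
  rw [Finset.sum_comm, Finset.mul_sum, Finset.sum_congr rfl (fun l _ => hmain l),
    Finset.sum_ite_mem, Finset.univ_inter]
  by_cases hne : (G.neighborFinset i ∩ G.neighborFinset j).Nonempty
  · rw [if_pos hne, mul_one, Finset.mul_sum]
  · rw [Finset.not_nonempty_iff_eq_empty.1 hne]
    simp
end

section
/- Let 0 ≤ ρ ≤ 1 and define h(ρ) = √( (4ρ⁸ + 2ρ⁴) / ((3 + 6ρ² + ρ⁴)² + 18ρ²(1+ρ²)² + 2ρ⁴) ). Then h is monotonically increasing on [0,1] and attains its maximum h(1) = √(3/87). -/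
/-- The asymptotic relative Frobenius-norm difference between the ordered and order-free
DAGAR precision matrices on the path graph. -/
noncomputable def dagarPathGap (ρ : ℝ) : ℝ :=
  Real.sqrt ((4 * ρ ^ 8 + 2 * ρ ^ 4)
    / ((3 + 6 * ρ ^ 2 + ρ ^ 4) ^ 2 + 18 * ρ ^ 2 * (1 + ρ ^ 2) ^ 2 + 2 * ρ ^ 4))

private lemma dagar_key (x y : ℝ) (hx : 0 ≤ x) (hxy : x ≤ y) :
    (4*x^4+2*x^2)*(y^4+30*y^3+80*y^2+54*y+9)
      ≤ (4*y^4+2*y^2)*(x^4+30*x^3+80*x^2+54*x+9) := by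
  have hy : 0 ≤ y := le_trans hx hxy
  have hQ : 0 ≤ (18*x + 36*x^3) + y*(216*x^3 + 108*x + 18 + 36*x^2)
      + y^2*(156*x^2 + 318*x^3 + 36*x) + y^3*(120*x^3 + 318*x^2 + 216*x + 36) := by
    positivity
  have hid : (4*y^4+2*y^2)*(x^4+30*x^3+80*x^2+54*x+9)
      - (4*x^4+2*x^2)*(y^4+30*y^3+80*y^2+54*y+9)
      = (y - x) * ((18*x + 36*x^3) + y*(216*x^3 + 108*x + 18 + 36*x^2)
        + y^2*(156*x^2 + 318*x^3 + 36*x) + y^3*(120*x^3 + 318*x^2 + 216*x + 36)) := by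
    ring
  nlinarith [mul_nonneg (sub_nonneg.2 hxy) hQ]

private lemma dagar_denom_pos (ρ : ℝ) :
    0 < (3 + 6 * ρ ^ 2 + ρ ^ 4) ^ 2 + 18 * ρ ^ 2 * (1 + ρ ^ 2) ^ 2 + 2 * ρ ^ 4 := by
  positivity

private lemma dagar_mono : MonotoneOn dagarPathGap (Set.Icc (0 : ℝ) 1) := by
  intro a ha b hb hab
  unfold dagarPathGap
  apply Real.sqrt_le_sqrt
  rw [div_le_div_iff₀ (dagar_denom_pos a) (dagar_denom_pos b)]
  have hx : (0:ℝ) ≤ a ^ 2 := sq_nonneg a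
  have hxy : a ^ 2 ≤ b ^ 2 := by nlinarith [ha.1]
  have key := dagar_key (a^2) (b^2) hx hxy
  nlinarith [key]

/-- `dagarPathGap` is monotonically increasing on `[0,1]` and attains its maximum
`√(3/87)` at `ρ = 1`. -/
theorem dagarPathGap_monotone_max :
    MonotoneOn dagarPathGap (Set.Icc (0 : ℝ) 1)
      ∧ dagarPathGap 1 = Real.sqrt (3 / 87)
      ∧ ∀ ρ ∈ Set.Icc (0 : ℝ) 1, dagarPathGap ρ ≤ dagarPathGap 1 := by
  refine ⟨dagar_mono, ?_, ?_⟩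
  · unfold dagarPathGap
    norm_num
  · intro ρ hρ
    exact dagar_mono hρ (by constructor <;> norm_num) hρ.2
end

section
/- With Σ_n = (1-ρ²)I_n + ρ²1_n1_nᵀ and v = ρ1_n for 0 ≤ ρ < 1 and n ≥ 1, the conditional variance satisfies 1 − vᵀΣ_n⁻¹v = 1 − nρ²/(1+(n-1)ρ²) = (1-ρ²)/(1+(n-1)ρ²), which is strictly positive; equivalently, the DAGAR conditional precision is τ = (1+(n-1)ρ²)/(1-ρ²). -/
open Matrix

/-- For the equicorrelated matrix `Σₙ = (1-ρ²)Iₙ + ρ² 1ₙ1ₙᵀ` and `v = ρ 1ₙ`, the conditional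
variance `1 - vᵀ Σₙ⁻¹ v` equals `1 - nρ²/(1+(n-1)ρ²) = (1-ρ²)/(1+(n-1)ρ²) > 0`;
equivalently the DAGAR conditional precision is `τ = (1+(n-1)ρ²)/(1-ρ²)`. -/
theorem dagar_conditional_variance (n : ℕ) (hn : 1 ≤ n) (ρ : ℝ) (h0 : 0 ≤ ρ) (h1 : ρ < 1) :
    (1 - (fun _ : Fin n => ρ) ⬝ᵥ
        (((1 - ρ ^ 2) • (1 : Matrix (Fin n) (Fin n) ℝ)
            + Matrix.of (fun _ _ : Fin n => ρ ^ 2))⁻¹ *ᵥ (fun _ : Fin n => ρ))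
        = 1 - (n : ℝ) * ρ ^ 2 / (1 + ((n : ℝ) - 1) * ρ ^ 2))
      ∧ (1 - (fun _ : Fin n => ρ) ⬝ᵥ
          (((1 - ρ ^ 2) • (1 : Matrix (Fin n) (Fin n) ℝ)
              + Matrix.of (fun _ _ : Fin n => ρ ^ 2))⁻¹ *ᵥ (fun _ : Fin n => ρ))
          = (1 - ρ ^ 2) / (1 + ((n : ℝ) - 1) * ρ ^ 2))
      ∧ 0 < (1 - ρ ^ 2) / (1 + ((n : ℝ) - 1) * ρ ^ 2) := by
  have ha : (0:ℝ) < 1 - ρ ^ 2 := by nlinarith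
  have hn1 : (1:ℝ) ≤ (n : ℝ) := by exact_mod_cast hn
  have hD : (0:ℝ) < 1 + ((n : ℝ) - 1) * ρ ^ 2 := by nlinarith [sq_nonneg ρ]
  set a : ℝ := 1 - ρ ^ 2 with ha_def
  set D : ℝ := 1 + ((n : ℝ) - 1) * ρ ^ 2 with hD_def
  set S : Matrix (Fin n) (Fin n) ℝ :=
    (1 - ρ ^ 2) • (1 : Matrix (Fin n) (Fin n) ℝ) + Matrix.of (fun _ _ : Fin n => ρ ^ 2)
    with hS
  set B : Matrix (Fin n) (Fin n) ℝ :=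
    Matrix.of (fun i j : Fin n => (if i = j then 1 / a else 0) - ρ ^ 2 / (a * D)) with hB
  have hSB : S * B = 1 := by
    ext i j
    simp only [hS, hB, Matrix.mul_apply, Matrix.add_apply, Matrix.smul_apply,
      Matrix.one_apply, Matrix.of_apply, smul_eq_mul]
    have expand : ∀ k : Fin n,
        ((1 - ρ ^ 2) * (if i = k then (1:ℝ) else 0) + ρ ^ 2) *
          ((if k = j then 1 / a else 0) - ρ ^ 2 / (a * D))
        = (if i = k then (1:ℝ) else 0) * (if k = j then a / a else 0)
          - (if i = k then a * ρ ^ 2 / (a * D) else 0)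
          + (if k = j then ρ ^ 2 / a else 0)
          - ρ ^ 2 * ρ ^ 2 / (a * D) := by
      intro k
      by_cases hik : i = k
      · subst hik
        by_cases hkj : i = j
        · subst hkj; simp only [if_pos rfl, if_true, eq_self_iff_true]; ring
        · simp only [if_pos rfl, if_neg hkj, if_true, eq_self_iff_true]; ring
      · by_cases hkj : k = j
        · subst hkj; simp only [if_pos rfl, if_neg hik, if_true, eq_self_iff_true]; ring
        · simp only [if_neg hik, if_neg hkj]; ring
    rw [Finset.sum_congr rfl (fun k _ => expand k)]
    simp only [ite_mul, one_mul, zero_mul, Finset.sum_sub_distrib, Finset.sum_add_distrib,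
      Finset.sum_ite_eq, Finset.sum_ite_eq', Finset.mem_univ, if_true, Finset.sum_const,
      Finset.card_univ, Fintype.card_fin, nsmul_eq_mul]
    have : (if i = j then a / a else 0) = (if i = j then (1:ℝ) else 0) := by
      split <;> simp [div_self ha.ne']
    rw [this]
    have key : -(a * ρ ^ 2 / (a * D)) + (ρ ^ 2 / a - (n:ℝ) * (ρ ^ 2 * ρ ^ 2 / (a * D))) = 0 := by
      field_simp
      rw [ha_def, hD_def]; ring
    split <;> linarith [key]
  have hinv : S⁻¹ = B := Matrix.inv_eq_right_inv hSB
  have hmv : (B *ᵥ (fun _ : Fin n => ρ)) = fun _ : Fin n => ρ / D := by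
    funext i
    simp only [hB, Matrix.mulVec, dotProduct, Matrix.of_apply]
    rw [Finset.sum_congr rfl (fun k _ => by
      show ((if i = k then 1 / a else 0) - ρ ^ 2 / (a * D)) * ρ
        = (if i = k then ρ / a else 0) - ρ ^ 2 / (a * D) * ρ
      split <;> ring)]
    simp only [Finset.sum_sub_distrib, Finset.sum_ite_eq, Finset.mem_univ, if_true,
      Finset.sum_const, Finset.card_univ, Fintype.card_fin, nsmul_eq_mul]
    field_simp
    rw [ha_def, hD_def]; ring
  have hdot : (fun _ : Fin n => ρ) ⬝ᵥ (S⁻¹ *ᵥ (fun _ : Fin n => ρ))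
      = (n : ℝ) * ρ ^ 2 / D := by
    rw [hinv, hmv]
    simp only [dotProduct, Finset.sum_const, Finset.card_univ, Fintype.card_fin,
      nsmul_eq_mul]
    ring
  refine ⟨by rw [hdot], ?_, div_pos ha hD⟩
  rw [hdot, ha_def, eq_div_iff hD.ne', sub_mul, div_mul_cancel₀ _ hD.ne', hD_def]
  ring
end
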